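/- arXiv:1607.03295 — 6 statements merged into one kernel-verified Lean document; each statement's English description precedes it below -/
import Mathlib

section
/- Let n ∈ ℕ, s ∈ [0,T), t ∈ [0,s], and let ψ : [0,T] → [0,∞] be a non-increasing function. Then Σ_{r∈[s,T]} q^{n,[s,T]}(r) ψ(r) ≤ Σ_{r∈[t,T]} q^{n,[t,T]}(r) ψ(r). -/
open MeasureTheory ProbabilityTheory ENNReal

noncomputable section

/-- The `n`-th Legendre polynomial (Rodrigues formula), as a function `ℝ → ℝ`. -/
def legendreP (n : ℕ) : ℝ → ℝ :=
  fun x => (1 / (2 ^ n * (n.factorial : ℝ))) * iteratedDeriv n (fun y : ℝ => (y ^ 2 - 1) ^ n) x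

/-- The set of roots of the `n`-th Legendre polynomial in `[-1,1]`. -/
def legRoots (n : ℕ) : Set ℝ :=
  {c | c ∈ Set.Icc (-1 : ℝ) 1 ∧ legendreP n c = 0}

open Classical in
def glWeight (n : ℕ) (a b t : ℝ) : ℝ :=
  if a < b ∧ (2 * t - (a + b)) / (b - a) ∈ legRoots n then
    ∫ x in a..b, ∏ᶠ c ∈ legRoots n \ {(2 * t - (a + b)) / (b - a)},
      (2 * x - (b - a) * c - (a + b)) / (2 * t - (b - a) * c - (a + b))
  else 0

/-- The iterated quadrature weights `\bar q^{n,Q}` on `[0,T]`. -/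
def qbar (T : ℝ) (Q : ℕ) : ℕ → ℝ → ℝ
  | 0 => fun t => if t = 0 then 1 else 0
  | n + 1 => fun t => ∑ᶠ s ∈ Set.Icc (0 : ℝ) t, qbar T Q n s * glWeight Q s T t

/-- Standard `d`-dimensional Brownian motion (independent coordinates, Gaussian
increments, independent increments, continuous paths started at `0`). -/
def IsStdBM {Ω : Type*} [MeasurableSpace Ω] (P : Measure Ω) (d : ℕ)
    (W : ℝ → Ω → (Fin d → ℝ)) : Prop :=
  (∀ ω, W 0 ω = 0) ∧
  (∀ ω, Continuous fun t => W t ω) ∧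
  (∀ t, Measurable (W t)) ∧
  (∀ s t : ℝ, 0 ≤ s → s ≤ t → ∀ i : Fin d,
    Measure.map (fun ω => W t ω i - W s ω i) P = gaussianReal 0 (Real.toNNReal (t - s))) ∧
  (∀ t : ℕ → ℝ, Monotone t →
    iIndepFun
      (fun (p : ℕ × Fin d) ω => W (t (p.1 + 1)) ω p.2 - W (t p.1) ω p.2) P)

/-- The semi-norm `‖·‖_{n,Q}` on random fields. -/
def semiNorm {Ω : Type*} [MeasurableSpace Ω] (P : Measure Ω) {d : ℕ}
    (W : ℝ → Ω → (Fin d → ℝ)) (T : ℝ) (n Q : ℕ)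
    (V : ℝ → (Fin d → ℝ) → Ω → ℝ) : ℝ≥0∞ :=
  ∑ᶠ t ∈ Set.Icc (0 : ℝ) T, ENNReal.ofReal (qbar T Q n t) *
    ⨆ s ∈ Set.Icc t T, ⨆ u ∈ Set.Icc (0 : ℝ) s, ⨆ z : Fin d → ℝ,
      (∫⁻ ω, ENNReal.ofReal ((V s (z + W u ω) ω) ^ 2) ∂P) ^ (1 / 2 : ℝ)

/-- The `L²(P;ℝ)` norm, valued in `[0,∞]`. -/
def l2Norm {Ω : Type*} [MeasurableSpace Ω] (P : Measure Ω) (X : Ω → ℝ) : ℝ≥0∞ :=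
  (∫⁻ ω, ENNReal.ofReal ((X ω) ^ 2) ∂P) ^ (1 / 2 : ℝ)

/-- The heat operator `u ↦ ∂_t u + (1/2) Δ_x u`. -/
def heatOp {d : ℕ} (u : ℝ → (Fin d → ℝ) → ℝ) : ℝ → (Fin d → ℝ) → ℝ :=
  fun t x => deriv (fun s => u s x) t +
    (1 / 2) * ∑ i : Fin d, iteratedDeriv 2 (fun y => u t (Function.update x i y)) (x i)

/-- `C^{1,2}` regularity: jointly `C¹` with continuous second spatial derivatives. -/
def IsC12 {d : ℕ} (u : ℝ → (Fin d → ℝ) → ℝ) : Prop :=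
  ContDiff ℝ 1 (fun p : ℝ × (Fin d → ℝ) => u p.1 p.2) ∧
  ∀ i : Fin d, Continuous fun p : ℝ × (Fin d → ℝ) =>
    iteratedDeriv 2 (fun y => u p.1 (Function.update p.2 i y)) (p.2 i)

end


/-!
The Gauss–Legendre rule on `[a, b]` is the affine image of the rule on `[-1, 1]`: its nodes are
`glNode a b c = ((b - a) c + a + b) / 2` for the Legendre roots `c`, with weights
`(b - a) / 2 * glRefWeight n c`. Moving the left endpoint from `s` down to `t` enlarges the
factor `(b - a) / 2` and moves every node to the left, where the non-increasing `ψ` is larger;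
after `ENNReal.ofReal` only the positive weights count, so the sum grows term by term.
-/

section Legendre

open Polynomial

theorem iteratedDeriv_polynomial_eval {𝕜 : Type*} [NontriviallyNormedField 𝕜] (p : 𝕜[X])
    (k : ℕ) : iteratedDeriv k (fun x => p.eval x) = fun x => (derivative^[k] p).eval x := by
  rw [iteratedDeriv_eq_iterate]
  induction k generalizing p with
  | zero => rfl
  | succ k ih =>
    rw [Function.iterate_succ_apply, Function.iterate_succ_apply, ← ih]
    exact congrArg _ (funext fun x => p.deriv)

theorem iterate_derivative_X_sq_sub_one_pow_ne_zero {R : Type*} [CommRing R] [CharZero R]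
    (n : ℕ) : derivative^[n] ((X ^ 2 - 1 : R[X]) ^ n) ≠ 0 := by
  have hquad : (X ^ 2 - C 1 : R[X]).Monic := monic_X_pow_sub_C 1 two_ne_zero
  have hmonic : ((X ^ 2 - C 1 : R[X]) ^ n).Monic := hquad.pow n
  have hdeg : ((X ^ 2 - C 1 : R[X]) ^ n).natDegree = n + n := by
    rw [hquad.natDegree_pow, natDegree_X_pow_sub_C]; ring
  -- the coefficient of `X ^ n` is `(2n)! / n!`
  intro h
  have hcoeff := congrArg (coeff · n) h
  simp only [coeff_iterate_derivative, coeff_zero, ← C_1] at hcoeff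
  rw [← hdeg, hmonic.coeff_natDegree, nsmul_one, Nat.cast_eq_zero,
    Nat.descFactorial_eq_zero_iff_lt] at hcoeff
  omega

theorem legRoots_finite (n : ℕ) : (legRoots n).Finite := by
  have hP (x : ℝ) : legendreP n x
      = 1 / (2 ^ n * (n.factorial : ℝ)) * (derivative^[n] ((X ^ 2 - 1 : ℝ[X]) ^ n)).eval x := by
    have : (fun y : ℝ => (y ^ 2 - 1) ^ n) = fun y => ((X ^ 2 - 1 : ℝ[X]) ^ n).eval y := by
      simp
    rw [legendreP, this, iteratedDeriv_polynomial_eval]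
  refine (finite_setOfPred_isRoot (iterate_derivative_X_sq_sub_one_pow_ne_zero n)).subset ?_
  rintro c ⟨-, hc⟩
  rw [hP] at hc
  exact (mul_eq_zero.1 hc).resolve_left (by positivity)

end Legendre

noncomputable def glNode (a b c : ℝ) : ℝ := ((b - a) * c + (a + b)) / 2

-- `glWeight n (-1) 1 c`: the weight of the node `c` of the rule on `[-1, 1]`
noncomputable def glRefWeight (n : ℕ) (c : ℝ) : ℝ :=
  ∫ y in (-1 : ℝ)..1, ∏ᶠ c' ∈ legRoots n \ {c}, (y - c') / (c - c')

section Nodes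

variable {a b : ℝ}

theorem glNode_normalize (hab : a < b) (c : ℝ) :
    (2 * glNode a b c - (a + b)) / (b - a) = c := by
  have : b - a ≠ 0 := (sub_pos.2 hab).ne'
  unfold glNode; field_simp; ring

theorem glNode_of_normalize (hab : a < b) (r : ℝ) :
    glNode a b ((2 * r - (a + b)) / (b - a)) = r := by
  have : b - a ≠ 0 := (sub_pos.2 hab).ne'
  unfold glNode; field_simp; ring

theorem glNode_injective (hab : a < b) : Function.Injective (glNode a b) :=
  Function.LeftInverse.injective (g := fun r => (2 * r - (a + b)) / (b - a))
    (glNode_normalize hab)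

theorem glNode_mem_Icc (hab : a ≤ b) {c : ℝ} (hc : c ∈ Set.Icc (-1 : ℝ) 1) :
    glNode a b c ∈ Set.Icc a b := by
  obtain ⟨h1, h2⟩ := hc
  have hba := sub_nonneg.2 hab
  constructor <;> unfold glNode <;> nlinarith

theorem glNode_le_glNode_left {t s c : ℝ} (hts : t ≤ s) (hc : c ≤ 1) :
    glNode t b c ≤ glNode s b c := by
  unfold glNode
  nlinarith [mul_nonneg (sub_nonneg.2 hts) (sub_nonneg.2 hc)]

end Nodes

section Weights

variable {n : ℕ} {a b : ℝ}

theorem glWeight_glNode (hab : a < b) {c : ℝ} (hc : c ∈ legRoots n) :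
    glWeight n a b (glNode a b c) = (b - a) / 2 * glRefWeight n c := by
  have hba : b - a ≠ 0 := (sub_pos.2 hab).ne'
  rw [glWeight, glNode_normalize hab, if_pos ⟨hab, hc⟩]
  have hchange : Set.EqOn
      (fun x => ∏ᶠ c' ∈ legRoots n \ {c},
        (2 * x - (b - a) * c' - (a + b)) / (2 * glNode a b c - (b - a) * c' - (a + b)))
      (fun x => (fun y => ∏ᶠ c' ∈ legRoots n \ {c}, (y - c') / (c - c'))
        (2 / (b - a) * x + -(a + b) / (b - a)))
      (Set.uIcc a b) := fun x _ => finprod_mem_congr rfl fun c' _ => by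
    have hnum : 2 * x - (b - a) * c' - (a + b)
        = (b - a) * (2 / (b - a) * x + -(a + b) / (b - a) - c') := by
      field_simp; ring
    have hden : 2 * glNode a b c - (b - a) * c' - (a + b) = (b - a) * (c - c') := by
      unfold glNode; ring
    rw [hnum, hden, mul_div_mul_left _ _ hba]
  rw [intervalIntegral.integral_congr hchange, intervalIntegral.integral_comp_mul_add
    (fun y => ∏ᶠ c' ∈ legRoots n \ {c}, (y - c') / (c - c')) (by positivity)]
  have hlo : 2 / (b - a) * a + -(a + b) / (b - a) = -1 := by field_simp; ring
  have hhi : 2 / (b - a) * b + -(a + b) / (b - a) = 1 := by field_simp; ring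
  rw [hlo, hhi, smul_eq_mul, inv_div, glRefWeight]

theorem mem_image_glNode_of_glWeight_ne_zero {r : ℝ} (h : glWeight n a b r ≠ 0) :
    r ∈ glNode a b '' legRoots n := by
  by_cases hr : a < b ∧ (2 * r - (a + b)) / (b - a) ∈ legRoots n
  · exact ⟨_, hr.2, glNode_of_normalize hr.1 r⟩
  · exact absurd (by rw [glWeight, if_neg hr]) h

theorem finsum_glWeight_mul (hab : a < b) (ψ : ℝ → ℝ≥0∞) :
    ∑ᶠ r ∈ Set.Icc a b, ENNReal.ofReal (glWeight n a b r) * ψ r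
      = ∑ᶠ c ∈ legRoots n, ENNReal.ofReal ((b - a) / 2 * glRefWeight n c) * ψ (glNode a b c) := by
  have hsupp : ∀ r ∈ Function.support fun r => ENNReal.ofReal (glWeight n a b r) * ψ r,
      r ∈ Set.Icc a b ↔ r ∈ glNode a b '' legRoots n := by
    refine fun r hr => ⟨fun _ => mem_image_glNode_of_glWeight_ne_zero ?_, ?_⟩
    · intro h0
      simp [h0] at hr
    · rintro ⟨c, hc, rfl⟩
      exact glNode_mem_Icc hab.le hc.1
  rw [finsum_mem_inter_support_eq' _ _ _ hsupp,
    finsum_mem_image (glNode_injective hab).injOn]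
  exact finsum_mem_congr rfl fun c hc => by rw [glWeight_glNode hab hc]

theorem finsum_glWeight_mul_le_of_le {t s : ℝ} (hts : t ≤ s) (hsb : s < b)
    {ψ : ℝ → ℝ≥0∞} (hψ : AntitoneOn ψ (Set.Icc t b)) :
    ∑ᶠ r ∈ Set.Icc s b, ENNReal.ofReal (glWeight n s b r) * ψ r
      ≤ ∑ᶠ r ∈ Set.Icc t b, ENNReal.ofReal (glWeight n t b r) * ψ r := by
  have htb := hts.trans_lt hsb
  have hfin := legRoots_finite n
  rw [finsum_glWeight_mul hsb, finsum_glWeight_mul htb,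
    finsum_mem_eq_finite_toFinset_sum _ hfin, finsum_mem_eq_finite_toFinset_sum _ hfin]
  refine Finset.sum_le_sum fun c hc => ?_
  have hc : c ∈ Set.Icc (-1 : ℝ) 1 := (hfin.mem_toFinset.1 hc).1
  have hnode_s := glNode_mem_Icc hsb.le hc
  rw [ENNReal.ofReal_mul (by linarith), ENNReal.ofReal_mul (by linarith)]
  gcongr ?_ * _ * ?_
  · exact ENNReal.ofReal_le_ofReal (by linarith)
  · exact hψ (glNode_mem_Icc htb.le hc) ⟨hts.trans hnode_s.1, hnode_s.2⟩
      (glNode_le_glNode_left hts hc.2)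

end Weights

theorem stmt0_general (T : ℝ) (n : ℕ)
    (s : ℝ) (hs : s ∈ Set.Ico (0 : ℝ) T) (t : ℝ) (ht : t ∈ Set.Icc (0 : ℝ) s)
    (ψ : ℝ → ℝ≥0∞) (hψ : AntitoneOn ψ (Set.Icc (0 : ℝ) T)) :
    (∑ᶠ r ∈ Set.Icc s T, ENNReal.ofReal (glWeight n s T r) * ψ r)
      ≤ ∑ᶠ r ∈ Set.Icc t T, ENNReal.ofReal (glWeight n t T r) * ψ r :=
  finsum_glWeight_mul_le_of_le ht.2 hs.2 (hψ.mono (Set.Icc_subset_Icc_left ht.1))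

theorem stmt0 (T : ℝ) (hT : 0 < T) (n : ℕ) (hn : 1 ≤ n)
    (s : ℝ) (hs : s ∈ Set.Ico (0 : ℝ) T) (t : ℝ) (ht : t ∈ Set.Icc (0 : ℝ) s)
    (ψ : ℝ → ℝ≥0∞) (hψ : AntitoneOn ψ (Set.Icc (0 : ℝ) T)) :
    (∑ᶠ r ∈ Set.Icc s T, ENNReal.ofReal (glWeight n s T r) * ψ r)
      ≤ ∑ᶠ r ∈ Set.Icc t T, ENNReal.ofReal (glWeight n t T r) * ψ r :=
  stmt0_general T n s hs t ht ψ hψ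
end

section
/- Let Q ∈ ℕ. Then for all n ∈ ℕ_0 and all k ∈ ℕ_0 with k < 2Q − n it holds that Σ_{t∈[0,T]} \bar q^{n,Q}(t) (T−t)^k / k! = T^{n+k} / (n+k)!. -/
/-!
Summing the Gauss–Legendre weights on `[s, T]` against `(T - t)^k / k!` gives exactly
`∫_s^T (T - t)^k / k! dt = (T - s)^(k+1) / (k+1)!`, because the `Q`-point rule is exact below
degree `2Q`. Hence the recursion defining `qbar` turns the sum for `(n + 1, k)` into the sum for
`(n, k + 1)`, and induction on `n` reduces everything to `n = 0`.

Exactness is the classical argument: by Rolle, `D^j (X² - 1)^Q` has `j` distinct roots in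
`(-1, 1)` for `j ≤ Q`, so the Legendre polynomial has `Q` simple roots there; `Q` integrations by
parts make it orthogonal to all polynomials of degree `< Q`; and dividing a polynomial of degree
`< 2Q` by it leaves a remainder of degree `< Q`, which the interpolatory rule integrates exactly.
On `[a, b]` the same argument runs with the Legendre polynomial composed with the affine map onto
`[-1, 1]`, whose orthogonality follows by a change of variables.
-/

open MeasureTheory ProbabilityTheory ENNReal

open Polynomial Finset Set

namespace Polynomial

theorem iterate_derivative_ne_zero {R : Type*} [CommRing R] [IsDomain R] [CharZero R]
    {p : R[X]} (hp : p ≠ 0) {k : ℕ} (hk : k ≤ p.natDegree) : derivative^[k] p ≠ 0 := by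
  intro h
  have := congrArg (coeff · (p.natDegree - k)) h
  simp only [coeff_iterate_derivative, Nat.sub_add_cancel hk, coeff_zero, nsmul_eq_mul,
    mul_eq_zero, Nat.cast_eq_zero, Nat.descFactorial_eq_zero_iff_lt, coeff_natDegree,
    leadingCoeff_eq_zero, hp, or_false] at this
  omega

theorem card_le_card_roots_derivative_Ioo_add_one {p : ℝ[X]} (hp' : derivative p ≠ 0)
    {a b : ℝ} {s : Finset ℝ} (hs : ↑s ⊆ Icc a b) (hroot : ∀ x ∈ s, p.IsRoot x) :
    #s ≤ #{x ∈ (derivative p).roots.toFinset | x ∈ Ioo a b} + 1 := by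
  refine (card_le_sdiff_of_interleaved fun x hx y hy hxy _ => ?_).trans
    (by gcongr; exact sdiff_subset)
  obtain ⟨z, hz, hz'⟩ := exists_deriv_eq_zero hxy p.continuousOn
    ((hroot x hx).eq_zero.trans (hroot y hy).eq_zero.symm)
  refine ⟨z, ?_, hz⟩
  rw [mem_filter, Multiset.mem_toFinset, mem_roots hp', IsRoot, ← p.deriv]
  exact ⟨hz', (hs hx).1.trans_lt hz.1, hz.2.trans_le (hs hy).2⟩

theorem iteratedDeriv_eval (p : ℝ[X]) (n : ℕ) :
    iteratedDeriv n (fun x => p.eval x) = fun x => (derivative^[n] p).eval x := by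
  induction n with
  | zero => simp
  | succ n ih =>
    rw [iteratedDeriv_succ, ih, Function.iterate_succ_apply']
    ext x
    exact Polynomial.deriv _

end Polynomial

namespace Lagrange

variable {ι : Type*} [DecidableEq ι] {s : Finset ι} {v : ι → ℝ} {a b : ℝ}

theorem integral_eval_eq_sum (hvs : Set.InjOn v s) {r : ℝ[X]} (hr : r.degree < #s) :
    ∫ x in a..b, r.eval x =
      ∑ i ∈ s, (∫ x in a..b, (Lagrange.basis s v i).eval x) * r.eval (v i) := by
  conv_lhs => rw [eq_interpolate hvs hr, interpolate_apply]
  simp only [eval_finsetSum, eval_mul, eval_C]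
  rw [intervalIntegral.integral_finsetSum fun i _ =>
    (Continuous.intervalIntegrable (by fun_prop) _ _)]
  exact Finset.sum_congr rfl fun i _ => by rw [intervalIntegral.integral_const_mul, mul_comm]

theorem sum_integral_basis_mul_eval (hvs : Set.InjOn v s) {f : ℝ[X]} (hf : f ≠ 0)
    (hfs : f.natDegree = #s) (hfv : ∀ i ∈ s, f.IsRoot (v i)) {m : ℕ}
    (horth : ∀ d : ℝ[X], d.natDegree < m → ∫ x in a..b, f.eval x * d.eval x = 0)
    {p : ℝ[X]} (hp : p.natDegree < #s + m) :
    ∑ i ∈ s, (∫ x in a..b, (Lagrange.basis s v i).eval x) * p.eval (v i) =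
      ∫ x in a..b, p.eval x := by
  obtain ⟨r, d, rfl, hr⟩ : ∃ r d : ℝ[X], r + f * d = p ∧ r.degree < #s :=
    ⟨p % f, p / f, EuclideanDomain.mod_add_div p f,
      hfs ▸ degree_eq_natDegree hf ▸ EuclideanDomain.mod_lt p hf⟩
  have hd : ∫ x in a..b, f.eval x * d.eval x = 0 := by
    rcases eq_or_ne d 0 with rfl | hd
    · simp
    refine horth d ?_
    have hr' : r.natDegree < #s + m := by
      rcases eq_or_ne r 0 with rfl | hr0
      · rw [natDegree_zero]; omega
      · have := (natDegree_lt_iff_degree_lt hr0).2 hr; omega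
    have := natDegree_sub_le (r + f * d) r
    rw [add_sub_cancel_left, natDegree_mul hf hd] at this
    omega
  calc ∑ i ∈ s, (∫ x in a..b, (Lagrange.basis s v i).eval x) * (r + f * d).eval (v i)
      = ∑ i ∈ s, (∫ x in a..b, (Lagrange.basis s v i).eval x) * r.eval (v i) := by
        refine Finset.sum_congr rfl fun i hi => ?_
        rw [eval_add, eval_mul, (hfv i hi).eq_zero, zero_mul, add_zero]
    _ = ∫ x in a..b, r.eval x := (integral_eval_eq_sum hvs hr).symm
    _ = ∫ x in a..b, (r + f * d).eval x := by
        simp only [eval_add, eval_mul]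
        rw [intervalIntegral.integral_add (Continuous.intervalIntegrable (by fun_prop) _ _)
          (Continuous.intervalIntegrable (by fun_prop) _ _), hd, add_zero]

end Lagrange

namespace GaussLegendre

/-- `D^j (X² - 1)^Q`; for `j = Q` it is `2^Q Q!` times the Legendre polynomial. -/
noncomputable def rodrigues (Q j : ℕ) : ℝ[X] := derivative^[j] ((X ^ 2 - 1) ^ Q)

theorem rodrigues_succ (Q j : ℕ) : rodrigues Q (j + 1) = derivative (rodrigues Q j) :=
  Function.iterate_succ_apply' _ _ _

theorem natDegree_X_sq_sub_one_pow (Q : ℕ) : ((X ^ 2 - 1 : ℝ[X]) ^ Q).natDegree = 2 * Q := by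
  rw [← C_1, (monic_X_pow_sub_C 1 two_ne_zero).natDegree_pow, natDegree_X_pow_sub_C, mul_comm]

theorem X_sq_sub_one_pow_ne_zero (Q : ℕ) : (X ^ 2 - 1 : ℝ[X]) ^ Q ≠ 0 :=
  pow_ne_zero _ (by simpa using X_pow_sub_C_ne_zero two_pos (1 : ℝ))

theorem rodrigues_ne_zero {Q j : ℕ} (hj : j ≤ 2 * Q) : rodrigues Q j ≠ 0 :=
  iterate_derivative_ne_zero (X_sq_sub_one_pow_ne_zero Q)
    (by rwa [natDegree_X_sq_sub_one_pow])

theorem natDegree_rodrigues_le (Q j : ℕ) : (rodrigues Q j).natDegree ≤ 2 * Q - j :=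
  natDegree_X_sq_sub_one_pow Q ▸ natDegree_iterate_derivative _ j

theorem rodrigues_isRoot {Q j : ℕ} (hj : j < Q) {x : ℝ} (hx : x ^ 2 = 1) :
    (rodrigues Q j).IsRoot x := by
  have := eval_dvd (x := x) (pow_sub_dvd_iterate_derivative_pow (X ^ 2 - 1 : ℝ[X]) Q j)
  simpa [rodrigues, hx, zero_pow (Nat.sub_ne_zero_of_lt hj)] using this

theorem le_card_roots_rodrigues_Ioo {Q j : ℕ} (hj : j ≤ Q) :
    j ≤ #{x ∈ (rodrigues Q j).roots.toFinset | x ∈ Ioo (-1 : ℝ) 1} := by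
  induction j with
  | zero => exact Nat.zero_le _
  | succ j ih =>
    set inner := {x ∈ (rodrigues Q j).roots.toFinset | x ∈ Ioo (-1 : ℝ) 1}
    have hne := rodrigues_ne_zero (Q := Q) (j := j + 1) (by omega)
    have hcard : #(insert (-1) (insert 1 inner)) = #inner + 2 := by
      rw [card_insert_of_notMem, card_insert_of_notMem] <;> norm_num [inner]
    have hs : ↑(insert (-1) (insert 1 inner)) ⊆ Icc (-1 : ℝ) 1 := by
      simp only [coe_insert, Set.insert_subset_iff]
      exact ⟨by norm_num, by norm_num, fun x hx => Ioo_subset_Icc_self (mem_filter.1 hx).2⟩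
    have hroot : ∀ x ∈ insert (-1) (insert 1 inner), (rodrigues Q j).IsRoot x := by
      simp only [Finset.mem_insert]
      rintro x (rfl | rfl | hx)
      · exact rodrigues_isRoot (by omega) (by norm_num)
      · exact rodrigues_isRoot (by omega) (by norm_num)
      · exact (mem_roots (rodrigues_ne_zero (by omega))).1
          (Multiset.mem_toFinset.1 (mem_filter.1 hx).1)
    have := card_le_card_roots_derivative_Ioo_add_one (rodrigues_succ Q j ▸ hne) hs hroot
    rw [← rodrigues_succ] at this
    have := ih (by omega)
    omega

noncomputable def nodes (Q : ℕ) : Finset ℝ := (rodrigues Q Q).roots.toFinset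

theorem card_nodes_le (Q : ℕ) : #(nodes Q) ≤ (rodrigues Q Q).natDegree :=
  (Multiset.toFinset_card_le _).trans (card_roots' _)

theorem natDegree_rodrigues_self (Q : ℕ) : (rodrigues Q Q).natDegree = Q := by
  have h₁ := natDegree_rodrigues_le Q Q
  have h₂ := (le_card_roots_rodrigues_Ioo le_rfl).trans
    ((card_filter_le _ _).trans (card_nodes_le Q))
  omega

theorem filter_nodes_Ioo (Q : ℕ) : {x ∈ nodes Q | x ∈ Ioo (-1 : ℝ) 1} = nodes Q :=
  eq_of_subset_of_card_le (filter_subset _ _) <| by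
    have := card_nodes_le Q
    rw [natDegree_rodrigues_self] at this
    exact this.trans (le_card_roots_rodrigues_Ioo le_rfl)

theorem card_nodes (Q : ℕ) : #(nodes Q) = Q :=
  le_antisymm ((card_nodes_le Q).trans (natDegree_rodrigues_self Q).le)
    (filter_nodes_Ioo Q ▸ le_card_roots_rodrigues_Ioo le_rfl)

theorem nodes_subset_Ioo (Q : ℕ) : ↑(nodes Q) ⊆ Ioo (-1 : ℝ) 1 := fun x hx => by
  rw [Finset.mem_coe, ← filter_nodes_Ioo] at hx
  exact (mem_filter.1 hx).2

theorem mem_nodes {Q : ℕ} {x : ℝ} : x ∈ nodes Q ↔ (rodrigues Q Q).IsRoot x := by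
  rw [nodes, Multiset.mem_toFinset, mem_roots (rodrigues_ne_zero (by omega))]

theorem integral_rodrigues_succ_mul {Q m : ℕ} (hm : m < Q) (r : ℝ[X]) :
    ∫ x in (-1 : ℝ)..1, (rodrigues Q (m + 1)).eval x * r.eval x =
      -∫ x in (-1 : ℝ)..1, (rodrigues Q m).eval x * (derivative r).eval x := by
  have ibp := intervalIntegral.integral_mul_deriv_eq_deriv_mul (a := -1) (b := 1)
    (fun x _ => r.hasDerivAt x) (fun x _ => (rodrigues Q m).hasDerivAt x)
    ((derivative r).continuous.intervalIntegrable _ _)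
    ((derivative (rodrigues Q m)).continuous.intervalIntegrable _ _)
  rw [(rodrigues_isRoot hm (by norm_num : (1 : ℝ) ^ 2 = 1)).eq_zero,
    (rodrigues_isRoot hm (by norm_num : (-1 : ℝ) ^ 2 = 1)).eq_zero] at ibp
  simp only [rodrigues_succ, mul_comm (eval _ (derivative _)), ibp, mul_zero, sub_zero, zero_sub]

theorem integral_rodrigues_add_mul {Q i j : ℕ} (h : i + j ≤ Q) (r : ℝ[X]) :
    ∫ x in (-1 : ℝ)..1, (rodrigues Q (i + j)).eval x * r.eval x =
      (-1) ^ j * ∫ x in (-1 : ℝ)..1, (rodrigues Q i).eval x * (derivative^[j] r).eval x := by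
  induction j generalizing r with
  | zero => simp
  | succ j ih =>
    rw [← add_assoc, integral_rodrigues_succ_mul (by omega), ih (by omega),
      Function.iterate_succ_apply, pow_succ]
    ring

theorem integral_rodrigues_mul_eq_zero {Q : ℕ} {r : ℝ[X]} (hr : r.natDegree < Q) :
    ∫ x in (-1 : ℝ)..1, (rodrigues Q Q).eval x * r.eval x = 0 := by
  simpa [iterate_derivative_eq_zero hr] using
    integral_rodrigues_add_mul (Q := Q) (i := 0) (j := Q) (by omega) r

theorem legendreP_eq (Q : ℕ) (x : ℝ) :
    legendreP Q x = 1 / (2 ^ Q * (Q.factorial : ℝ)) * (rodrigues Q Q).eval x := by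
  have : (fun y : ℝ => (y ^ 2 - 1) ^ Q) = fun y => ((X ^ 2 - 1 : ℝ[X]) ^ Q).eval y := by
    simp
  rw [legendreP, this, iteratedDeriv_eval, rodrigues]

theorem legRoots_eq_nodes (Q : ℕ) : legRoots Q = ↑(nodes Q) := by
  ext c
  have hK : 1 / (2 ^ Q * (Q.factorial : ℝ)) ≠ 0 := by positivity
  simp only [legRoots, legendreP_eq, mul_eq_zero, hK, false_or, Set.mem_ofPred_eq,
    Finset.mem_coe, mem_nodes, IsRoot.def]
  exact ⟨And.right,
    fun hc => ⟨Ioo_subset_Icc_self (nodes_subset_Ioo Q (mem_nodes.2 hc)), hc⟩⟩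

/-- Coordinate on the reference interval `[-1, 1]`, written exactly as in `glWeight`. -/
noncomputable def toRef (a b t : ℝ) : ℝ := (2 * t - (a + b)) / (b - a)

noncomputable def ofRef (a b c : ℝ) : ℝ := ((b - a) * c + (a + b)) / 2

variable {a b : ℝ}

theorem toRef_ofRef (hab : a ≠ b) (c : ℝ) : toRef a b (ofRef a b c) = c := by
  have : b - a ≠ 0 := sub_ne_zero.2 hab.symm
  rw [toRef, ofRef]
  field_simp
  ring

theorem ofRef_toRef (hab : a ≠ b) (t : ℝ) : ofRef a b (toRef a b t) = t := by
  have : b - a ≠ 0 := sub_ne_zero.2 hab.symm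
  rw [toRef, ofRef]
  field_simp
  ring

theorem ofRef_injective (hab : a ≠ b) : Function.Injective (ofRef a b) :=
  Function.LeftInverse.injective (toRef_ofRef hab)

theorem integral_comp_toRef (hab : a ≠ b) (g : ℝ → ℝ) :
    ∫ x in a..b, g (toRef a b x) = (b - a) / 2 * ∫ y in (-1 : ℝ)..1, g y := by
  have hba : b - a ≠ 0 := sub_ne_zero.2 hab.symm
  have h : ∀ x, toRef a b x = 2 / (b - a) * x - (a + b) / (b - a) := fun x => by
    rw [toRef]; ring
  simp_rw [h]
  rw [intervalIntegral.integral_comp_mul_sub g (div_ne_zero two_ne_zero hba), smul_eq_mul,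
    inv_div]
  congr 2 <;> field_simp <;> ring

noncomputable def legendreOn (Q : ℕ) (a b : ℝ) : ℝ[X] :=
  (rodrigues Q Q).comp (C (2 / (b - a)) * X + C (-(a + b) / (b - a)))

theorem eval_legendreOn (Q : ℕ) (x : ℝ) :
    (legendreOn Q a b).eval x = (rodrigues Q Q).eval (toRef a b x) := by
  rw [legendreOn, eval_comp, toRef]
  congr 1
  simp only [eval_add, eval_mul, eval_C, eval_X]
  ring

theorem natDegree_legendreOn (Q : ℕ) (hab : a ≠ b) : (legendreOn Q a b).natDegree = Q := by
  rw [legendreOn, natDegree_comp, natDegree_linear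
    (div_ne_zero two_ne_zero (sub_ne_zero.2 hab.symm)), natDegree_rodrigues_self, mul_one]

theorem legendreOn_ne_zero (Q : ℕ) (hab : a ≠ b) : legendreOn Q a b ≠ 0 := fun h =>
  rodrigues_ne_zero (Q := Q) (j := Q) (by omega) <| Polynomial.funext fun c => by
    rw [eval_zero, ← toRef_ofRef hab c, ← eval_legendreOn, h, eval_zero]

theorem integral_legendreOn_mul_eq_zero {Q : ℕ} (hab : a ≠ b) {d : ℝ[X]}
    (hd : d.natDegree < Q) :
    ∫ x in a..b, (legendreOn Q a b).eval x * d.eval x = 0 := by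
  set e := d.comp (C ((b - a) / 2) * X + C ((a + b) / 2))
  have he : ∀ x, d.eval x = e.eval (toRef a b x) := fun x => by
    simp only [e, eval_comp, eval_add, eval_mul, eval_C, eval_X]
    conv_lhs => rw [← ofRef_toRef hab x]
    rw [ofRef]
    ring_nf
  have hdeg : e.natDegree < Q := natDegree_comp_le.trans_lt <| by
    have := Nat.mul_le_mul_left d.natDegree
      (natDegree_linear_le (a := (b - a) / 2) (b := (a + b) / 2))
    omega
  simp only [eval_legendreOn, he]
  rw [integral_comp_toRef hab (fun y => (rodrigues Q Q).eval y * e.eval y),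
    integral_rodrigues_mul_eq_zero hdeg, mul_zero]

noncomputable def nodesOn (Q : ℕ) (a b : ℝ) : Finset ℝ := (nodes Q).image (ofRef a b)

theorem nodesOn_subset_Ioo (Q : ℕ) (hab : a < b) : ↑(nodesOn Q a b) ⊆ Ioo a b := by
  simp only [nodesOn, coe_image, Set.image_subset_iff]
  intro c hc
  obtain ⟨h₁, h₂⟩ := nodes_subset_Ioo Q hc
  constructor <;> simp only [ofRef] <;> nlinarith

theorem glWeight_eq_zero_of_notMem {Q : ℕ} {t : ℝ} (ht : t ∉ nodesOn Q a b) :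
    glWeight Q a b t = 0 := by
  rw [glWeight, if_neg]
  rintro ⟨hab, hc⟩
  rw [legRoots_eq_nodes] at hc
  exact ht (mem_image.2 ⟨_, hc, ofRef_toRef hab.ne t⟩)

theorem glWeight_ofRef {Q : ℕ} (hab : a < b) {c : ℝ} (hc : c ∈ nodes Q) :
    glWeight Q a b (ofRef a b c) =
      ∫ x in a..b, (Lagrange.basis (nodes Q) (ofRef a b) c).eval x := by
  have hc' : toRef a b (ofRef a b c) = c := toRef_ofRef hab.ne c
  rw [glWeight, ← toRef, hc', if_pos ⟨hab, by rwa [legRoots_eq_nodes]⟩, legRoots_eq_nodes,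
    ← coe_singleton, ← coe_sdiff, ← erase_eq]
  refine intervalIntegral.integral_congr fun x _ => ?_
  simp only [finprod_mem_coe_finset, Lagrange.basis, Lagrange.basisDivisor, eval_prod, eval_mul,
    eval_C, eval_sub, eval_X]
  refine Finset.prod_congr rfl fun c' _ => ?_
  rw [ofRef, ofRef]
  field_simp
  ring

theorem sum_glWeight_mul_eval {Q : ℕ} (hab : a < b) {p : ℝ[X]} (hp : p.natDegree < 2 * Q) :
    ∑ t ∈ nodesOn Q a b, glWeight Q a b t * p.eval t = ∫ x in a..b, p.eval x := by
  rw [nodesOn, sum_image fun c _ c' _ h => ofRef_injective hab.ne h]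
  rw [Finset.sum_congr rfl fun c hc => by rw [glWeight_ofRef hab hc]]
  refine Lagrange.sum_integral_basis_mul_eval (ofRef_injective hab.ne).injOn
    (legendreOn_ne_zero Q hab.ne) ((natDegree_legendreOn Q hab.ne).trans (card_nodes Q).symm)
    (fun c hc => ?_) (fun d hd => integral_legendreOn_mul_eq_zero hab.ne hd)
    (by rwa [card_nodes, ← two_mul])
  rw [IsRoot, eval_legendreOn, toRef_ofRef hab.ne]
  exact mem_nodes.1 hc

noncomputable def qbarNodes (T : ℝ) (Q : ℕ) : ℕ → Finset ℝ
  | 0 => {0}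
  | n + 1 => (qbarNodes T Q n).biUnion fun s => nodesOn Q s T

variable {T : ℝ} {Q : ℕ}

theorem qbarNodes_subset_Ico (hT : 0 < T) (n : ℕ) : ↑(qbarNodes T Q n) ⊆ Ico 0 T := by
  induction n with
  | zero => simpa [qbarNodes] using hT
  | succ n ih =>
    simp only [qbarNodes, coe_biUnion, Set.iUnion_subset_iff]
    intro s hs t ht
    obtain ⟨hs₀, hsT⟩ := ih hs
    obtain ⟨hst, htT⟩ := nodesOn_subset_Ioo Q hsT ht
    exact ⟨hs₀.trans hst.le, htT⟩

theorem nodesOn_subset_qbarNodes {n : ℕ} {s : ℝ} (hs : s ∈ qbarNodes T Q n) :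
    nodesOn Q s T ⊆ qbarNodes T Q (n + 1) :=
  subset_biUnion_of_mem (fun s => nodesOn Q s T) hs

theorem qbar_eq_zero_of_notMem {n : ℕ} {t : ℝ} (ht : t ∉ qbarNodes T Q n) :
    qbar T Q n t = 0 := by
  induction n generalizing t with
  | zero => simpa [qbar, qbarNodes] using ht
  | succ n ih =>
    refine finsum_mem_eq_zero_of_forall_eq_zero fun s _ => ?_
    by_cases hs : s ∈ qbarNodes T Q n
    · rw [glWeight_eq_zero_of_notMem fun h => ht (nodesOn_subset_qbarNodes hs h), mul_zero]
    · rw [ih hs, zero_mul]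

theorem qbar_succ (hT : 0 < T) (n : ℕ) (t : ℝ) :
    qbar T Q (n + 1) t = ∑ s ∈ qbarNodes T Q n, qbar T Q n s * glWeight Q s T t := by
  refine finsum_mem_eq_sum_of_inter_support_eq _ (Set.ext fun s => ⟨?_, ?_⟩)
  · rintro ⟨-, hs⟩
    refine ⟨by_contra fun h => hs ?_, hs⟩
    simp only [qbar_eq_zero_of_notMem h, zero_mul]
  · rintro ⟨hs, hs'⟩
    refine ⟨⟨(qbarNodes_subset_Ico hT n hs).1, not_lt.1 fun hts => hs' ?_⟩, hs'⟩
    suffices t ∉ nodesOn Q s T by simp only [glWeight_eq_zero_of_notMem this, mul_zero]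
    exact fun h => hts.not_gt (nodesOn_subset_Ioo Q (qbarNodes_subset_Ico hT n hs).2 h).1

theorem integral_pow_div_factorial (T s : ℝ) (k : ℕ) :
    ∫ t in s..T, (T - t) ^ k / k.factorial = (T - s) ^ (k + 1) / (k + 1).factorial := by
  rw [intervalIntegral.integral_div, intervalIntegral.integral_comp_sub_left (· ^ k), sub_self,
    integral_pow, Nat.factorial_succ]
  push_cast
  field_simp
  ring

theorem sum_qbar_mul_pow_div_factorial (hT : 0 < T) {n k : ℕ} (hk : n + k < 2 * Q) :
    ∑ t ∈ qbarNodes T Q n, qbar T Q n t * ((T - t) ^ k / k.factorial) =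
      T ^ (n + k) / (n + k).factorial := by
  induction n generalizing k with
  | zero => simp [qbarNodes, qbar]
  | succ n ih =>
    have hφ : ∀ t, (T - t) ^ k / k.factorial =
        (C (k.factorial : ℝ)⁻¹ * (C T - X) ^ k).eval t :=
      fun t => by simp [div_eq_inv_mul]
    have hdeg : (C (k.factorial : ℝ)⁻¹ * (C T - X) ^ k).natDegree < 2 * Q := by
      have : (C T - X : ℝ[X]).natDegree ≤ 1 := (natDegree_sub_le _ _).trans (by simp)
      have := (natDegree_C_mul_le (k.factorial : ℝ)⁻¹ _).trans (natDegree_pow_le_of_le k this)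
      omega
    have hinner : ∀ s ∈ qbarNodes T Q n,
        ∑ t ∈ qbarNodes T Q (n + 1), glWeight Q s T t * ((T - t) ^ k / k.factorial) =
          (T - s) ^ (k + 1) / (k + 1).factorial := fun s hs => by
      rw [← sum_subset (nodesOn_subset_qbarNodes hs)
        fun t _ ht => by rw [glWeight_eq_zero_of_notMem ht, zero_mul]]
      simp only [hφ]
      rw [sum_glWeight_mul_eval (qbarNodes_subset_Ico hT n hs).2 hdeg]
      simp only [← hφ, integral_pow_div_factorial]
    calc ∑ t ∈ qbarNodes T Q (n + 1), qbar T Q (n + 1) t * ((T - t) ^ k / k.factorial)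
        = ∑ s ∈ qbarNodes T Q n, qbar T Q n s *
            ∑ t ∈ qbarNodes T Q (n + 1), glWeight Q s T t * ((T - t) ^ k / k.factorial) := by
          simp only [qbar_succ hT, sum_mul, mul_sum, mul_assoc]
          exact sum_comm
      _ = T ^ (n + 1 + k) / (n + 1 + k).factorial := by
          rw [sum_congr rfl fun s hs => by rw [hinner s hs], ih (by omega),
            Nat.add_right_comm, add_assoc]

end GaussLegendre

theorem stmt2_general (T : ℝ) (hT : 0 < T) (Q : ℕ)
    (n k : ℕ) (hk : n + k < 2 * Q) :
    ∑ᶠ t ∈ Set.Icc (0 : ℝ) T, qbar T Q n t * ((T - t) ^ k / (k.factorial : ℝ))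
      = T ^ (n + k) / ((n + k).factorial : ℝ) := by
  have hsupp : Icc 0 T ∩ Function.support (fun t => qbar T Q n t * ((T - t) ^ k / k.factorial))
      ⊆ GaussLegendre.qbarNodes T Q n := fun t ⟨_, ht⟩ => by_contra fun h => ht <| by
    simp only [GaussLegendre.qbar_eq_zero_of_notMem h, zero_mul]
  rw [finsum_mem_eq_sum_of_subset _ hsupp
    ((GaussLegendre.qbarNodes_subset_Ico hT n).trans Ico_subset_Icc_self)]
  exact GaussLegendre.sum_qbar_mul_pow_div_factorial hT hk

theorem stmt2 (T : ℝ) (hT : 0 < T) (Q : ℕ) (hQ : 1 ≤ Q)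
    (n k : ℕ) (hk : n + k < 2 * Q) :
    ∑ᶠ t ∈ Set.Icc (0 : ℝ) T, qbar T Q n t * ((T - t) ^ k / (k.factorial : ℝ))
      = T ^ (n + k) / ((n + k).factorial : ℝ) :=
  stmt2_general T hT Q n k hk
end

section
/- Let Q ∈ ℕ and k ∈ ℕ_0 with k ≤ 2Q − 1. Then ‖1‖_{k,Q} = T^k / k!, where 1 denotes the constant random field [0,T]×ℝ^d×Ω ∋ (s,x,ω) ↦ 1 ∈ ℝ. -/
open MeasureTheory ProbabilityTheory ENNReal

/-!
Each `L²` term in `‖1‖_{k,Q}` equals `1`, so the norm is `∑ₜ \bar q^{k,Q}(t)`. The weights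
`\bar q^{n,Q}` are those of the `n`-fold iterated `Q`-point Gauss–Legendre rule: summing
`(T - t)^j / j!` against `\bar q^{n+1,Q}` first applies one rule on `[s, T]`, which is exact because
`j ≤ 2Q - 1`, and turns the integrand into `(T - s)^(j+1) / (j+1)!`. By induction the sum is
`T^(n+j) / (n+j)!`.

Exactness of Gauss–Legendre quadrature: by Rodrigues' formula and integration by parts the
Legendre polynomial `Pₙ` is orthogonal to all lower degrees. Multiplying `Pₙ` by the nodal
polynomial of its sign changes in `(-1, 1)` gives a nonnegative nonzero polynomial, so there are at
least `n` sign changes and `Pₙ` has `n` simple roots there. Dividing a polynomial of degree `< 2n`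
by the nodal polynomial leaves a remainder that interpolation integrates exactly, and a quotient
orthogonal to `Pₙ`. The weights are nonnegative since the rule integrates squared Lagrange basis
polynomials exactly.
-/

open Polynomial Set Function

noncomputable section

def legendrePoly (n : ℕ) : ℝ[X] :=
  C (1 / (2 ^ n * (n.factorial : ℝ))) * derivative^[n] ((X ^ 2 - 1) ^ n)

lemma iteratedDeriv_eval_eq_eval_iterate_derivative (p : ℝ[X]) (k : ℕ) :
    iteratedDeriv k (fun x => p.eval x) = fun x => (derivative^[k] p).eval x := by
  induction k with
  | zero => simp
  | succ k ih =>
    rw [iteratedDeriv_succ, ih, Function.iterate_succ_apply']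
    exact funext fun x => Polynomial.deriv _

lemma legendreP_eq_eval (n : ℕ) (x : ℝ) : legendreP n x = (legendrePoly n).eval x := by
  have h : (fun y : ℝ => (y ^ 2 - 1) ^ n) = fun y => ((X ^ 2 - 1 : ℝ[X]) ^ n).eval y := by
    simp
  rw [legendreP, h, iteratedDeriv_eval_eq_eval_iterate_derivative, legendrePoly, eval_mul, eval_C]

lemma integral_mul_iterate_derivative_eval {f : ℝ[X]} {a b : ℝ} (m : ℕ)
    (hf : ∀ i < m, (derivative^[i] f).IsRoot a ∧ (derivative^[i] f).IsRoot b) (r : ℝ[X]) :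
    ∫ x in a..b, r.eval x * (derivative^[m] f).eval x
      = (-1) ^ m * ∫ x in a..b, (derivative^[m] r).eval x * f.eval x := by
  induction m generalizing r with
  | zero => simp
  | succ m ih =>
    obtain ⟨ha, hb⟩ := hf m m.lt_succ_self
    rw [Function.iterate_succ_apply', intervalIntegral.integral_mul_deriv_eq_deriv_mul
      (fun x _ => r.hasDerivAt x) (fun x _ => (derivative^[m] f).hasDerivAt x)
      ((derivative r).continuous.intervalIntegrable a b)
      ((derivative _).continuous.intervalIntegrable a b), ha.eq_zero, hb.eq_zero,
      ih (fun i hi => hf i (by omega)), Function.iterate_succ_apply]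
    ring

lemma isRoot_iterate_derivative_X_sq_sub_one_pow {n i : ℕ} (hi : i < n) {a : ℝ}
    (ha : a = 1 ∨ a = -1) : (derivative^[i] ((X ^ 2 - 1 : ℝ[X]) ^ n)).IsRoot a := by
  refine isRoot_iterate_derivative_of_lt_rootMultiplicity (hi.trans_le ?_)
  have hne : (X ^ 2 - 1 : ℝ[X]) ^ n ≠ 0 := pow_ne_zero _ (X_pow_sub_C_ne_zero two_pos 1)
  rw [le_rootMultiplicity_iff hne]
  refine pow_dvd_pow_of_dvd ?_ n
  rcases ha with rfl | rfl
  · exact ⟨X + 1, by simp only [map_one]; ring⟩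
  · exact ⟨X - 1, by simp only [map_neg, map_one]; ring⟩

lemma integral_legendrePoly_mul_eq_zero {n : ℕ} {r : ℝ[X]} (hr : r.natDegree < n) :
    ∫ x in (-1 : ℝ)..1, r.eval x * (legendrePoly n).eval x = 0 := by
  have hF := integral_mul_iterate_derivative_eval n
    (fun i hi => ⟨isRoot_iterate_derivative_X_sq_sub_one_pow hi (Or.inr rfl),
      isRoot_iterate_derivative_X_sq_sub_one_pow hi (Or.inl rfl)⟩) r
  simp only [legendrePoly, eval_mul, eval_C, mul_left_comm (r.eval _),
    intervalIntegral.integral_const_mul, hF,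
    iterate_derivative_eq_zero hr, eval_zero, zero_mul, intervalIntegral.integral_zero,
    mul_zero]

lemma natDegree_X_sq_sub_one : (X ^ 2 - 1 : ℝ[X]).natDegree = 2 := by
  compute_degree!

lemma legendrePoly_ne_zero (n : ℕ) : legendrePoly n ≠ 0 := by
  have hco : (derivative^[n] ((X ^ 2 - 1 : ℝ[X]) ^ n)).coeff n ≠ 0 := by
    have hmonic : ((X ^ 2 - 1 : ℝ[X]) ^ n).Monic := (monic_X_pow_sub_C 1 two_ne_zero).pow n
    have hdeg : ((X ^ 2 - 1 : ℝ[X]) ^ n).natDegree = n + n := by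
      rw [natDegree_pow, natDegree_X_sq_sub_one]; ring
    rw [coeff_iterate_derivative, ← hdeg, hmonic.coeff_natDegree, nsmul_one, Nat.cast_ne_zero,
      ne_eq, Nat.descFactorial_eq_zero_iff_lt, hdeg]
    omega
  rw [legendrePoly, Ne, mul_eq_zero, C_eq_zero, not_or]
  exact ⟨by positivity, fun h => hco (by rw [h, coeff_zero])⟩

lemma natDegree_legendrePoly_le (n : ℕ) : (legendrePoly n).natDegree ≤ n := by
  refine natDegree_C_mul_le _ _ |>.trans ?_
  refine (natDegree_iterate_derivative _ n).trans ?_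
  rw [natDegree_pow, natDegree_X_sq_sub_one]
  omega

lemma eval_mul_eval_nonneg_of_forall_not_isRoot {p : ℝ[X]} (hp : ∀ x, ¬p.IsRoot x) (y z : ℝ) :
    0 ≤ p.eval y * p.eval z := by
  by_contra! hneg
  have h0 : (0 : ℝ) ∈ uIcc (p.eval y) (p.eval z) := by
    rcases mul_neg_iff.mp hneg with h | h
    · exact mem_uIcc.mpr (Or.inr ⟨h.2.le, h.1.le⟩)
    · exact mem_uIcc.mpr (Or.inl ⟨h.1.le, h.2.le⟩)
  obtain ⟨x, -, hx⟩ := intermediate_value_uIcc p.continuous.continuousOn h0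
  exact hp x hx

lemma exists_sign_mul_nodal_nonneg {p : ℝ[X]} (hp : p ≠ 0) (a b : ℝ) :
    ∃ s : Finset ℝ, (∀ x ∈ s, x ∈ Ioo a b ∧ p.IsRoot x) ∧ ∃ ε : ℝ, ε ≠ 0 ∧
      ∀ y ∈ Icc a b, 0 ≤ ε * (p.eval y * (Lagrange.nodal s id).eval y) := by
  induction hd : p.natDegree using Nat.strong_induction_on generalizing p with
  | _ d ih =>
  by_cases hroot : ∃ x, p.IsRoot x
  swap
  · push Not at hroot
    refine ⟨∅, by simp, p.eval 0, fun h0 => hroot 0 h0, fun y _ => ?_⟩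
    simpa using eval_mul_eval_nonneg_of_forall_not_isRoot hroot 0 y
  obtain ⟨x, hx⟩ := hroot
  set q := p /ₘ (X - C x)
  have hpq : p = (X - C x) * q := (mul_divByMonic_eq_iff_isRoot.mpr hx).symm
  have hq : q ≠ 0 := by rintro h; rw [h, mul_zero] at hpq; exact hp hpq
  have hdeg : q.natDegree < d := by
    rw [← hd, hpq, natDegree_mul (X_sub_C_ne_zero x) hq, natDegree_X_sub_C]; omega
  have heval : ∀ z, p.eval z = (z - x) * q.eval z := fun z => by
    rw [hpq, eval_mul, eval_sub, eval_X, eval_C]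
  obtain ⟨s, hs, ε, hε, hsign⟩ := ih _ hdeg hq rfl
  have hroots : ∀ z ∈ s, z ∈ Ioo a b ∧ p.IsRoot z := fun z hz =>
    ⟨(hs z hz).1, by rw [IsRoot, heval, (hs z hz).2.eq_zero, mul_zero]⟩
  by_cases hxs : x ∈ s
  · refine ⟨s.erase x, fun z hz => hroots z (Finset.mem_of_mem_erase hz), ε, hε, fun y hy => ?_⟩
    have := hsign y hy
    rw [Lagrange.eval_nodal, ← Finset.mul_prod_erase s _ hxs, ← Lagrange.eval_nodal, id] at this
    rw [heval]
    linear_combination this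
  by_cases hxI : x ∈ Ioo a b
  · refine ⟨insert x s, ?_, ε, hε, fun y hy => ?_⟩
    · exact Finset.forall_mem_insert _ _ _ |>.mpr ⟨⟨hxI, hx⟩, hroots⟩
    rw [Lagrange.eval_nodal, Finset.prod_insert hxs, ← Lagrange.eval_nodal, heval, id]
    have := mul_nonneg (sq_nonneg (y - x)) (hsign y hy)
    linear_combination this
  · refine ⟨s, hroots, ε * (if x ≤ a then 1 else -1), mul_ne_zero hε (by split_ifs <;> norm_num),
      fun y hy => ?_⟩
    have hfactor : 0 ≤ (if x ≤ a then 1 else -1) * (y - x) := by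
      split_ifs with hxa
      · linarith [hy.1]
      · have : b ≤ x := by by_contra h; exact hxI ⟨lt_of_not_ge hxa, lt_of_not_ge h⟩
        linarith [hy.2]
    rw [heval]
    linear_combination mul_nonneg hfactor (hsign y hy)

lemma integral_eval_pos {p : ℝ[X]} (hp : p ≠ 0) {a b : ℝ} (hab : a < b)
    (hnonneg : ∀ y ∈ Icc a b, 0 ≤ p.eval y) : 0 < ∫ x in a..b, p.eval x := by
  obtain ⟨c, hc, hroot⟩ := (Icc_infinite hab).exists_notMem_finset p.roots.toFinset
  refine intervalIntegral.integral_pos hab p.continuous.continuousOn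
    (fun y hy => hnonneg y (Ioc_subset_Icc_self hy)) ⟨c, hc, (hnonneg c hc).lt_of_ne' ?_⟩
  simpa [hp] using hroot

lemma exists_legendrePoly_roots_eq (n : ℕ) :
    ∃ s : Finset ℝ, (legendrePoly n).roots = s.val ∧ s.card = n ∧ ↑s ⊆ Ioo (-1 : ℝ) 1 := by
  have hP := legendrePoly_ne_zero n
  obtain ⟨s, hs, ε, hε, hsign⟩ := exists_sign_mul_nodal_nonneg hP (-1) 1
  have hn : n ≤ s.card := by
    by_contra! hlt
    have hne : C ε * (Lagrange.nodal s id * legendrePoly n) ≠ 0 :=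
      mul_ne_zero (C_ne_zero.mpr hε) (mul_ne_zero Lagrange.nodal_ne_zero hP)
    have hpos := integral_eval_pos hne (by norm_num : (-1 : ℝ) < 1) fun y hy => by
      simpa only [eval_mul, eval_C, mul_comm (eval y (Lagrange.nodal s id))] using hsign y hy
    have hzero := integral_legendrePoly_mul_eq_zero (r := Lagrange.nodal s id)
      (by rwa [Lagrange.natDegree_nodal])
    simp only [eval_mul, eval_C, intervalIntegral.integral_const_mul, hzero, mul_zero] at hpos
    exact hpos.false
  have hle : s.val ≤ (legendrePoly n).roots :=
    (Multiset.le_iff_subset s.nodup).mpr fun x hx => (mem_roots hP).mpr (hs x hx).2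
  have hcard : Multiset.card (legendrePoly n).roots ≤ n :=
    (card_roots' _).trans (natDegree_legendrePoly_le n)
  have heq := Multiset.eq_of_le_of_card_le hle (hcard.trans hn)
  refine ⟨s, heq.symm, le_antisymm ?_ hn, fun x hx => (hs x hx).1⟩
  rwa [← heq] at hcard

def legendreRoots (n : ℕ) : Finset ℝ := (legendrePoly n).roots.toFinset

lemma legendrePoly_roots (n : ℕ) : (legendrePoly n).roots = (legendreRoots n).val := by
  obtain ⟨s, hs, -⟩ := exists_legendrePoly_roots_eq n
  rw [legendreRoots, hs, Finset.val_toFinset]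

lemma card_legendreRoots (n : ℕ) : (legendreRoots n).card = n := by
  obtain ⟨s, hs, hcard, -⟩ := exists_legendrePoly_roots_eq n
  rw [legendreRoots, hs, Finset.val_toFinset, hcard]

lemma legRoots_eq (n : ℕ) : legRoots n = ↑(legendreRoots n) := by
  obtain ⟨s, hs, -, hsub⟩ := exists_legendrePoly_roots_eq n
  ext c
  rw [legRoots, mem_ofPred_eq, legendreP_eq_eval, Finset.mem_coe, legendreRoots,
    Multiset.mem_toFinset, mem_roots (legendrePoly_ne_zero n), IsRoot.def]
  refine ⟨And.right, fun hc => ⟨Ioo_subset_Icc_self (hsub ?_), hc⟩⟩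
  rw [Finset.mem_coe, ← Finset.mem_val, ← hs, mem_roots (legendrePoly_ne_zero n)]
  exact hc

lemma legendrePoly_eq_C_mul_nodal (n : ℕ) :
    legendrePoly n = C (legendrePoly n).leadingCoeff * Lagrange.nodal (legendreRoots n) id := by
  have hcard : Multiset.card (legendrePoly n).roots = (legendrePoly n).natDegree := by
    refine le_antisymm (card_roots' _) ?_
    rw [legendrePoly_roots, Finset.card_val, card_legendreRoots]
    exact natDegree_legendrePoly_le n
  conv_lhs => rw [← C_leadingCoeff_mul_prod_multiset_X_sub_C hcard]
  rw [legendrePoly_roots, Lagrange.nodal, Finset.prod_eq_multiset_prod]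
  rfl

lemma integral_mul_nodal_legendreRoots_eq_zero {n : ℕ} {r : ℝ[X]} (hr : r.natDegree < n) :
    ∫ x in (-1 : ℝ)..1, r.eval x * (Lagrange.nodal (legendreRoots n) id).eval x = 0 := by
  have hlc : (legendrePoly n).leadingCoeff ≠ 0 := leadingCoeff_ne_zero.mpr (legendrePoly_ne_zero n)
  have h := integral_legendrePoly_mul_eq_zero hr
  rw [legendrePoly_eq_C_mul_nodal] at h
  simp only [eval_mul, eval_C, mul_left_comm (r.eval _), intervalIntegral.integral_const_mul,
    mul_eq_zero, hlc, false_or] at h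
  exact h

lemma integral_eq_sum_integral_basis_mul {s : Finset ℝ} {r : ℝ[X]} (hr : r.degree < s.card)
    (a b : ℝ) :
    ∫ x in a..b, r.eval x = ∑ c ∈ s, (∫ x in a..b, (Lagrange.basis s id c).eval x) * r.eval c := by
  conv_lhs => rw [Lagrange.eq_interpolate (injOn_id _) hr, Lagrange.interpolate_apply]
  simp only [eval_finsetSum, eval_mul, eval_C, id]
  rw [intervalIntegral.integral_finsetSum
    (f := fun c x => r.eval c * (Lagrange.basis s id c).eval x) fun c _ =>
      (continuous_const.mul (Lagrange.basis s id c).continuous).intervalIntegrable a b]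
  exact Finset.sum_congr rfl fun c _ => by rw [intervalIntegral.integral_const_mul, mul_comm]

def legendreWeight (n : ℕ) (c : ℝ) : ℝ :=
  ∫ x in (-1 : ℝ)..1, (Lagrange.basis (legendreRoots n) id c).eval x

theorem integral_eq_sum_legendreWeight_mul {n : ℕ} {p : ℝ[X]} (hp : p.natDegree < 2 * n) :
    ∫ x in (-1 : ℝ)..1, p.eval x = ∑ c ∈ legendreRoots n, legendreWeight n c * p.eval c := by
  set N := Lagrange.nodal (legendreRoots n) id
  have hN : N.Monic := Lagrange.nodal_monic
  have hR : (p %ₘ N).degree < (legendreRoots n).card := by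
    rw [← Lagrange.degree_nodal (v := (id : ℝ → ℝ))]
    exact degree_modByMonic_lt p hN
  have hA : (p /ₘ N).natDegree < n := by
    rw [natDegree_divByMonic p hN, Lagrange.natDegree_nodal, card_legendreRoots]
    omega
  have hsplit : ∀ x, p.eval x = (p %ₘ N).eval x + (p /ₘ N).eval x * N.eval x := fun x => by
    conv_lhs => rw [← modByMonic_add_div p N]
    rw [eval_add, eval_mul, mul_comm (N.eval x)]
  rw [intervalIntegral.integral_congr fun x _ => hsplit x, intervalIntegral.integral_add
    (f := fun x => (p %ₘ N).eval x) (g := fun x => (p /ₘ N).eval x * N.eval x)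
    ((p %ₘ N).continuous.intervalIntegrable _ _)
    (((p /ₘ N).continuous.mul N.continuous).intervalIntegrable _ _),
    integral_mul_nodal_legendreRoots_eq_zero hA, add_zero,
    integral_eq_sum_integral_basis_mul hR]
  refine Finset.sum_congr rfl fun c hc => ?_
  have hNc : N.eval c = 0 := Lagrange.eval_nodal_at_node (v := id) hc
  rw [hsplit c, hNc, mul_zero, add_zero, legendreWeight]

lemma legendreWeight_nonneg {n : ℕ} {c : ℝ} (hc : c ∈ legendreRoots n) :
    0 ≤ legendreWeight n c := by
  have hn : 0 < n := card_legendreRoots n ▸ Finset.card_pos.mpr ⟨c, hc⟩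
  have hdeg : (Lagrange.basis (legendreRoots n) id c ^ 2).natDegree < 2 * n := by
    rw [natDegree_pow, Lagrange.natDegree_basis (injOn_id _) hc, card_legendreRoots]
    omega
  have hself : (Lagrange.basis (legendreRoots n) id c).eval c = 1 :=
    Lagrange.eval_basis_self (v := id) (injOn_id _) hc
  have hother : ∀ c' ∈ legendreRoots n, c' ≠ c →
      (Lagrange.basis (legendreRoots n) id c).eval c' = 0 := fun c' hc' hne =>
    Lagrange.eval_basis_of_ne (v := id) hne.symm hc'
  have h := integral_eq_sum_legendreWeight_mul hdeg
  rw [Finset.sum_eq_single c (fun c' hc' hne => by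
      rw [eval_pow, hother c' hc' hne, zero_pow two_ne_zero, mul_zero]) (fun h => absurd hc h),
    eval_pow, hself, one_pow, mul_one] at h
  rw [← h]
  exact intervalIntegral.integral_nonneg (by norm_num) fun x _ => by rw [eval_pow]; positivity

lemma integral_comp_normalize {a b : ℝ} (hab : a ≠ b) (g : ℝ → ℝ) :
    ∫ x in a..b, g ((2 * x - (a + b)) / (b - a)) = (b - a) / 2 * ∫ y in (-1 : ℝ)..1, g y := by
  have hba : b - a ≠ 0 := sub_ne_zero.mpr hab.symm
  have h := intervalIntegral.integral_comp_mul_sub g (a := a) (b := b)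
    (div_ne_zero two_ne_zero hba) ((a + b) / (b - a))
  rw [show 2 / (b - a) * a - (a + b) / (b - a) = -1 by field_simp; ring,
    show 2 / (b - a) * b - (a + b) / (b - a) = 1 by field_simp; ring, inv_div, smul_eq_mul] at h
  rw [← h]
  congr 1 with x
  congr 1
  field_simp

lemma glWeight_of_lt {n : ℕ} {a b : ℝ} (hab : a < b) (t : ℝ) :
    glWeight n a b t = if (2 * t - (a + b)) / (b - a) ∈ legendreRoots n then
      (b - a) / 2 * legendreWeight n ((2 * t - (a + b)) / (b - a)) else 0 := by
  have hba : b - a ≠ 0 := (sub_pos.mpr hab).ne'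
  rw [glWeight, legRoots_eq]
  simp only [hab, true_and, Finset.mem_coe]
  split_ifs with hτ
  swap
  · rfl
  rw [legendreWeight, ← integral_comp_normalize hab.ne]
  refine intervalIntegral.integral_congr fun x _ => ?_
  rw [← Finset.coe_erase, finprod_mem_coe_finset, Lagrange.basis, eval_prod]
  refine Finset.prod_congr rfl fun c hc => ?_
  have hnorm : ∀ y, 2 * y - (b - a) * c - (a + b) = (b - a) * ((2 * y - (a + b)) / (b - a) - c) :=
    fun y => by field_simp; ring
  rw [Lagrange.basisDivisor, eval_mul, eval_C, eval_sub, eval_X, eval_C, id, id, hnorm x, hnorm t,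
    mul_div_mul_left _ _ hba, div_eq_inv_mul]

theorem finsum_glWeight_mul_eval {n : ℕ} {a b : ℝ} (hab : a ≤ b) {p : ℝ[X]}
    (hp : p.natDegree < 2 * n) :
    ∑ᶠ t, glWeight n a b t * p.eval t = ∫ x in a..b, p.eval x := by
  rcases hab.eq_or_lt with rfl | hab
  · simp [glWeight]
  have hba : b - a ≠ 0 := (sub_pos.mpr hab).ne'
  set φ : ℝ → ℝ := fun c => ((b - a) * c + (a + b)) / 2
  have hψφ : ∀ c, (2 * φ c - (a + b)) / (b - a) = c := fun c => by field_simp; ring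
  have hφψ : ∀ x, φ ((2 * x - (a + b)) / (b - a)) = x := fun x => by simp only [φ]; field_simp; ring
  have hφ : Bijective φ :=
    ⟨LeftInverse.injective (g := fun t => (2 * t - (a + b)) / (b - a)) hψφ, fun x => ⟨_, hφψ x⟩⟩
  set L : ℝ[X] := C ((b - a) / 2) * X + C ((a + b) / 2)
  have hL : ∀ c, (p.comp L).eval c = p.eval (φ c) := fun c => by
    simp only [L, φ, eval_comp, eval_add, eval_mul, eval_C, eval_X]
    ring_nf
  have hdeg : (p.comp L).natDegree < 2 * n := by
    rwa [natDegree_comp, natDegree_linear (div_ne_zero hba two_ne_zero), mul_one]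
  calc ∑ᶠ t, glWeight n a b t * p.eval t
      = ∑ᶠ c, glWeight n a b (φ c) * p.eval (φ c) := (finsum_comp φ hφ).symm
    _ = ∑ c ∈ legendreRoots n, (b - a) / 2 * legendreWeight n c * (p.comp L).eval c := by
        rw [finsum_eq_sum_of_support_subset (s := legendreRoots n)]
        · refine Finset.sum_congr rfl fun c hc => ?_
          rw [glWeight_of_lt hab, hψφ, if_pos hc, hL]
        · intro c hc
          by_contra hcs
          rw [mem_support, glWeight_of_lt hab, hψφ, if_neg (by exact_mod_cast hcs), zero_mul] at hc
          exact hc rfl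
    _ = (b - a) / 2 * ∫ y in (-1 : ℝ)..1, (p.comp L).eval y := by
        rw [integral_eq_sum_legendreWeight_mul hdeg, Finset.mul_sum]
        exact Finset.sum_congr rfl fun c _ => by ring
    _ = ∫ x in a..b, p.eval x := by
        rw [← integral_comp_normalize hab.ne]
        exact intervalIntegral.integral_congr fun x _ => by rw [hL, hφψ]

lemma glWeight_nonneg (n : ℕ) (a b t : ℝ) : 0 ≤ glWeight n a b t := by
  by_cases hab : a < b
  · rw [glWeight_of_lt hab]
    split_ifs with hτ
    · exact mul_nonneg (div_nonneg (sub_pos.mpr hab).le two_pos.le) (legendreWeight_nonneg hτ)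
    · exact le_rfl
  · simp [glWeight, hab]

lemma mem_Icc_of_glWeight_ne_zero {n : ℕ} {a b t : ℝ} (h : glWeight n a b t ≠ 0) :
    t ∈ Icc a b := by
  rw [glWeight] at h
  split_ifs at h with hcond
  · obtain ⟨hab, ⟨h1, h2⟩, -⟩ := hcond
    have hba : 0 < b - a := sub_pos.mpr hab
    rw [le_div_iff₀ hba] at h1
    rw [div_le_iff₀ hba] at h2
    constructor <;> linarith
  · exact absurd rfl h

lemma hasFiniteSupport_glWeight (n : ℕ) (a b : ℝ) : HasFiniteSupport (glWeight n a b) := by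
  by_cases hab : a < b
  · refine ((legendreRoots n).finite_toSet.image fun c => ((b - a) * c + (a + b)) / 2).subset ?_
    intro t ht
    rw [mem_support, glWeight_of_lt hab] at ht
    split_ifs at ht with hτ
    · exact ⟨_, hτ, by field_simp [(sub_pos.mpr hab).ne']; ring⟩
    · exact absurd rfl ht
  · have hempty : support (glWeight n a b) = ∅ := by
      ext t
      simp [glWeight, hab]
    rw [HasFiniteSupport, hempty]
    exact finite_empty

section FiniteKernel

variable {α β R : Type*} [Semiring R] {g : α → R} {w : α → β → R}

lemma hasFiniteSupport_finsum_mul (hg : HasFiniteSupport g) (hw : ∀ s, HasFiniteSupport (w s)) :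
    HasFiniteSupport fun t => ∑ᶠ s, g s * w s t := by
  have hsum : ∀ t, ∑ᶠ s, g s * w s t = ∑ s ∈ hg.toFinset, g s * w s t := fun t =>
    finsum_eq_sum_of_support_subset _ fun s hs => hg.mem_toFinset.mpr (left_ne_zero_of_mul hs)
  simp_rw [hsum]
  exact HasFiniteSupport.sum (fun s => (hw s).fun_mul_right fun _ => g s) _

lemma finsum_finsum_mul_mul (hg : HasFiniteSupport g) (hw : ∀ s, HasFiniteSupport (w s))
    (f : β → R) :
    ∑ᶠ t, (∑ᶠ s, g s * w s t) * f t = ∑ᶠ s, g s * ∑ᶠ t, w s t * f t := by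
  have hsum : ∀ h : α → R, ∑ᶠ s, g s * h s = ∑ s ∈ hg.toFinset, g s * h s := fun h =>
    finsum_eq_sum_of_support_subset _ fun s hs => hg.mem_toFinset.mpr (left_ne_zero_of_mul hs)
  have hleft : ∀ t, ∑ᶠ s, g s * w s t = ∑ s ∈ hg.toFinset, g s * w s t := fun t => hsum (w · t)
  rw [hsum]
  simp_rw [hleft, Finset.sum_mul]
  rw [finsum_sum_comm _ (fun t s => g s * w s t * f t) fun s _ =>
    ((hw s).fun_mul_right fun _ => g s).fun_mul_left f]
  refine Finset.sum_congr rfl fun s _ => ?_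
  rw [mul_finsum' _ _ ((hw s).fun_mul_left f)]
  simp_rw [mul_assoc]

end FiniteKernel

section IteratedWeights

variable {T : ℝ} {Q : ℕ}

lemma mem_Icc_of_qbar_ne_zero (hT : 0 ≤ T) {n : ℕ} {t : ℝ} (h : qbar T Q n t ≠ 0) :
    t ∈ Icc 0 T := by
  cases n with
  | zero =>
    simp only [qbar, ne_eq, ite_eq_right_iff, one_ne_zero, imp_false, not_not] at h
    subst h
    exact ⟨le_rfl, hT⟩
  | succ n =>
    obtain ⟨s, hs, hne⟩ := exists_ne_zero_of_finsum_mem_ne_zero h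
    have ht := mem_Icc_of_glWeight_ne_zero (right_ne_zero_of_mul hne)
    exact ⟨hs.1.trans ht.1, ht.2⟩

lemma qbar_succ_apply (hT : 0 ≤ T) (n : ℕ) (t : ℝ) :
    qbar T Q (n + 1) t = ∑ᶠ s, qbar T Q n s * glWeight Q s T t := by
  rw [← finsum_mem_univ]
  refine finsum_mem_inter_support_eq' _ _ _ fun s hs => ?_
  have hq := (mem_Icc_of_qbar_ne_zero hT (left_ne_zero_of_mul hs)).1
  have hw := (mem_Icc_of_glWeight_ne_zero (right_ne_zero_of_mul hs)).1
  exact iff_of_true ⟨hq, hw⟩ trivial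

lemma hasFiniteSupport_qbar (hT : 0 ≤ T) (n : ℕ) : HasFiniteSupport (qbar T Q n) := by
  induction n with
  | zero =>
    refine (finite_singleton (0 : ℝ)).subset fun t ht => ?_
    by_contra h
    exact ht (if_neg h)
  | succ n ih =>
    rw [show qbar T Q (n + 1) = _ from funext (qbar_succ_apply hT n)]
    exact hasFiniteSupport_finsum_mul ih fun s => hasFiniteSupport_glWeight Q s T

lemma qbar_nonneg (n : ℕ) (t : ℝ) : 0 ≤ qbar T Q n t := by
  induction n generalizing t with
  | zero =>
    simp only [qbar]
    split_ifs <;> norm_num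
  | succ n ih =>
    exact finsum_nonneg fun s => finsum_nonneg fun _ => mul_nonneg (ih s) (glWeight_nonneg _ _ _ _)

lemma integral_sub_pow_div_factorial (j : ℕ) (s T : ℝ) :
    ∫ x in s..T, (T - x) ^ j / (j.factorial : ℝ) = (T - s) ^ (j + 1) / ((j + 1).factorial : ℝ) := by
  rw [intervalIntegral.integral_div, intervalIntegral.integral_comp_sub_left (fun x => x ^ j),
    integral_pow, sub_self, zero_pow j.succ_ne_zero, sub_zero, Nat.factorial_succ]
  push_cast
  field_simp

theorem finsum_qbar_mul_pow (hT : 0 ≤ T) (n j : ℕ) (hnj : n + j ≤ 2 * Q) :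
    ∑ᶠ t, qbar T Q n t * ((T - t) ^ j / (j.factorial : ℝ))
      = T ^ (n + j) / ((n + j).factorial : ℝ) := by
  induction n generalizing j with
  | zero =>
    rw [finsum_eq_single _ 0 fun t ht => by simp only [qbar, if_neg ht, zero_mul]]
    simp [qbar]
  | succ n ih =>
    have hp : (C ((j.factorial : ℝ)⁻¹) * (C T - X) ^ j).natDegree < 2 * Q := by
      refine lt_of_le_of_lt (b := j) ?_ (by omega)
      compute_degree
    have hinner : ∀ s, qbar T Q n s * ∑ᶠ t, glWeight Q s T t * ((T - t) ^ j / (j.factorial : ℝ))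
        = qbar T Q n s * ((T - s) ^ (j + 1) / ((j + 1).factorial : ℝ)) := fun s => by
      by_cases hs : qbar T Q n s = 0
      · rw [hs, zero_mul, zero_mul]
      rw [← integral_sub_pow_div_factorial]
      have h := finsum_glWeight_mul_eval (mem_Icc_of_qbar_ne_zero hT hs).2 hp
      simp only [eval_mul, eval_C, eval_pow, eval_sub, eval_X] at h
      simp only [div_eq_inv_mul, h]
    calc ∑ᶠ t, qbar T Q (n + 1) t * ((T - t) ^ j / (j.factorial : ℝ))
        = ∑ᶠ s, qbar T Q n s * ∑ᶠ t, glWeight Q s T t * ((T - t) ^ j / (j.factorial : ℝ)) := by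
          simp_rw [qbar_succ_apply hT]
          exact finsum_finsum_mul_mul (hasFiniteSupport_qbar hT n)
            (fun s => hasFiniteSupport_glWeight Q s T) _
      _ = T ^ (n + 1 + j) / ((n + 1 + j).factorial : ℝ) := by
          rw [finsum_congr hinner, ih (j + 1) (by omega), add_assoc, add_comm 1 j]

end IteratedWeights

lemma ofReal_finsum_of_nonneg {α : Type*} {f : α → ℝ} (hf : HasFiniteSupport f)
    (hnonneg : ∀ a, 0 ≤ f a) : ENNReal.ofReal (∑ᶠ a, f a) = ∑ᶠ a, ENNReal.ofReal (f a) := by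
  rw [finsum_eq_sum _ hf, finsum_eq_sum_of_support_subset (s := hf.toFinset) _ fun a ha =>
      hf.mem_toFinset.mpr fun h0 => ha (by rw [h0, ENNReal.ofReal_zero]),
    ENNReal.ofReal_sum_of_nonneg fun a _ => hnonneg a]

lemma semiNorm_one {Ω : Type*} [MeasurableSpace Ω] (P : Measure Ω) [IsProbabilityMeasure P]
    {d : ℕ} (W : ℝ → Ω → (Fin d → ℝ)) {T : ℝ} (hT : 0 ≤ T) (n Q : ℕ) :
    semiNorm P W T n Q (fun _ _ _ => 1) = ENNReal.ofReal (∑ᶠ t, qbar T Q n t) := by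
  have hsup : ∀ t ∈ Icc 0 T, (⨆ s ∈ Icc t T, ⨆ u ∈ Icc (0 : ℝ) s, ⨆ _z : Fin d → ℝ,
      (∫⁻ _ω, ENNReal.ofReal ((1 : ℝ) ^ 2) ∂P) ^ (1 / 2 : ℝ)) = 1 := fun t ht => by
    simp only [one_pow, ENNReal.ofReal_one, lintegral_one, measure_univ, ENNReal.one_rpow]
    refine le_antisymm (iSup₂_le fun s _ => iSup₂_le fun u _ => iSup_le fun _ => le_rfl) ?_
    refine le_iSup₂_of_le T ⟨ht.2, le_rfl⟩ (le_iSup₂_of_le 0 ⟨le_rfl, hT⟩ ?_)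
    exact le_iSup_of_le 0 le_rfl
  rw [semiNorm, finsum_mem_congr (M := ℝ≥0∞) rfl fun t ht => by rw [hsup t ht, mul_one],
    ofReal_finsum_of_nonneg (hasFiniteSupport_qbar hT n) (qbar_nonneg n),
    ← finsum_mem_univ fun t => ENNReal.ofReal (qbar T Q n t)]
  refine finsum_mem_inter_support_eq' _ _ _ fun t ht => iff_of_true ?_ trivial
  exact mem_Icc_of_qbar_ne_zero (n := n) (Q := Q) hT fun h0 =>
    ht (by simp only [h0, ENNReal.ofReal_zero])

end

theorem stmt8_general (T : ℝ) (hT : 0 < T) (d : ℕ)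
    {Ω : Type} [mΩ : MeasurableSpace Ω] (P : Measure Ω) [IsProbabilityMeasure P]
    (W : ℝ → Ω → (Fin d → ℝ))
    (Q : ℕ) (k : ℕ) (hk : k ≤ 2 * Q - 1) :
    semiNorm P W T k Q (fun _ _ _ => (1 : ℝ))
      = ENNReal.ofReal (T ^ k / (k.factorial : ℝ)) := by
  have h := finsum_qbar_mul_pow (Q := Q) hT.le k 0 (by omega)
  simp only [pow_zero, Nat.factorial_zero, Nat.cast_one, div_one, mul_one,
    add_zero] at h
  rw [semiNorm_one P W hT.le, h]

theorem stmt8 (T : ℝ) (hT : 0 < T) (d : ℕ) (hd : 1 ≤ d)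
    {Ω : Type} [mΩ : MeasurableSpace Ω] (P : Measure Ω) [IsProbabilityMeasure P]
    (W : ℝ → Ω → (Fin d → ℝ)) (hW : IsStdBM P d W)
    (Q : ℕ) (hQ : 1 ≤ Q) (k : ℕ) (hk : k ≤ 2 * Q - 1) :
    semiNorm P W T k Q (fun _ _ _ => (1 : ℝ))
      = ENNReal.ofReal (T ^ k / (k.factorial : ℝ)) :=
  stmt8_general T hT d (mΩ := mΩ) P W Q k hk
end

section
/- For every α ∈ [0, 1/4] and every n ∈ ℕ it holds that n^{2αn} · ((2n+1)!)^{1−α} · (n!)^4 / ( (2n+1) · ((2n)!)^3 ) ≤ 1. -/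
/-!
With `x = n^(2n) / (2n+1)!`, the left-hand side equals `x^α · (n!)^4 / ((2n)!)^2`, and
`x^α ≤ max 1 (x^(1/4))` for `0 ≤ α ≤ 1/4`, so it suffices to treat `α = 0` and `α = 1/4`.
For `α = 0` the claim is `(n!)^2 ≤ (2n)!`. For `α = 1/4` it is
`n^(2n) (n!)^16 ≤ (2n+1) ((2n)!)^9`, which follows from `n^n ≤ 3^n n!` (as `n^n / n! ≤ e^n`),
`4^n (n!)^2 ≤ (2n+1) (2n)!` (the central binomial coefficient is the largest of the `2n+1`
coefficients summing to `4^n`) and `(2n+1)^8 ≤ 3^(8n)`, because `3^10 ≤ 4^9`.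
-/

open Nat

namespace Nat

lemma factorial_mul_factorial_le_factorial_two_mul (n : ℕ) : n ! * n ! ≤ (2 * n)! :=
  Nat.le_of_dvd (factorial_pos _) (two_mul n ▸ factorial_mul_factorial_dvd_factorial_add n n)

lemma four_pow_mul_factorial_mul_factorial_le (n : ℕ) :
    4 ^ n * (n ! * n !) ≤ (2 * n + 1) * (2 * n)! :=
  calc 4 ^ n * (n ! * n !) ≤ (2 * n + 1) * (2 * n).choose n * (n ! * n !) :=
        Nat.mul_le_mul_right _ (four_pow_le_two_mul_add_one_mul_central_binom n)
    _ = (2 * n + 1) * (2 * n)! := by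
        rw [two_mul, ← add_choose_mul_factorial_mul_factorial n n]; ring

lemma pow_self_le_three_pow_mul_factorial (n : ℕ) : n ^ n ≤ 3 ^ n * n ! := by
  have hexp : Real.exp n ≤ 3 ^ n := by
    rw [← Real.exp_one_pow]
    exact pow_le_pow_left₀ (Real.exp_pos 1).le Real.exp_one_lt_three.le n
  have h := (Real.pow_div_factorial_le_exp (x := n) (Nat.cast_nonneg n) n).trans hexp
  rw [div_le_iff₀ (by positivity)] at h
  exact_mod_cast h

lemma two_mul_add_one_le_three_pow (n : ℕ) : 2 * n + 1 ≤ 3 ^ n := by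
  induction n with
  | zero => simp
  | succ k ih => rw [pow_succ]; omega

lemma pow_two_mul_mul_factorial_pow_le (n : ℕ) :
    n ^ (2 * n) * n ! ^ 16 ≤ (2 * n + 1) * (2 * n)! ^ 9 := by
  refine Nat.le_of_mul_le_mul_left ?_ (pow_pos (succ_pos (2 * n)) 8)
  calc (2 * n + 1) ^ 8 * (n ^ (2 * n) * n ! ^ 16)
      ≤ (3 ^ n) ^ 8 * ((3 ^ n * n !) ^ 2 * n ! ^ 16) := by
        rw [pow_mul' n 2 n]
        gcongr
        exacts [two_mul_add_one_le_three_pow n, pow_self_le_three_pow_mul_factorial n]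
    _ = 3 ^ (10 * n) * (n ! * n !) ^ 9 := by ring
    _ ≤ 4 ^ (9 * n) * (n ! * n !) ^ 9 := by
        rw [pow_mul, pow_mul]; exact Nat.mul_le_mul_right _ (Nat.pow_le_pow_left (by norm_num) n)
    _ = (4 ^ n * (n ! * n !)) ^ 9 := by ring
    _ ≤ ((2 * n + 1) * (2 * n)!) ^ 9 :=
        Nat.pow_le_pow_left (four_pow_mul_factorial_mul_factorial_le n) 9
    _ = (2 * n + 1) ^ 8 * ((2 * n + 1) * (2 * n)! ^ 9) := by ring

end Nat

namespace Real

lemma rpow_mul_le_of_mul_pow_le {x y z a : ℝ} {k : ℕ} (hk : k ≠ 0) (hx : 0 ≤ x) (hy : 0 ≤ y)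
    (hz : 0 ≤ z) (ha : 0 ≤ a) (hak : a ≤ (k : ℝ)⁻¹) (h₀ : y ≤ z) (h₁ : x * y ^ k ≤ z ^ k) :
    x ^ a * y ≤ z := by
  rcases le_total x 1 with hx1 | hx1
  · calc x ^ a * y ≤ 1 * y := by gcongr; exact rpow_le_one hx hx1 ha
      _ ≤ z := by rwa [one_mul]
  · refine le_of_pow_le_pow_left₀ hk hz ?_
    calc (x ^ a * y) ^ k ≤ (x ^ (k⁻¹ : ℝ) * y) ^ k := by gcongr
      _ = x * y ^ k := by rw [mul_pow, rpow_inv_natCast_pow hx hk]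
      _ ≤ z ^ k := h₁

end Real

theorem stmt13_general (α : ℝ) (hα : α ∈ Set.Icc (0 : ℝ) (1 / 4)) (n : ℕ) :
    (n : ℝ) ^ (2 * α * (n : ℝ)) * ((2 * n + 1).factorial : ℝ) ^ ((1 : ℝ) - α)
        * ((n.factorial : ℝ)) ^ 4
      / ((2 * (n : ℝ) + 1) * (((2 * n).factorial : ℝ)) ^ 3) ≤ 1 := by
  have hF : (n ! : ℝ) ^ 2 ≤ (2 * n)! := by
    exact_mod_cast sq n ! ▸ factorial_mul_factorial_le_factorial_two_mul n
  have key : (n : ℝ) ^ (2 * n) * (n ! : ℝ) ^ 16 ≤ (2 * n + 1) * ((2 * n)! : ℝ) ^ 9 := by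
    exact_mod_cast pow_two_mul_mul_factorial_pow_le n
  set F : ℝ := (n ! : ℝ)
  set G : ℝ := ((2 * n)! : ℝ)
  set A : ℝ := ((2 * n + 1)! : ℝ)
  set x : ℝ := (n : ℝ) ^ (2 * n) / A
  have hA : A = (2 * n + 1) * G := by simp [A, G, factorial_succ]
  have hLHS : (n : ℝ) ^ (2 * α * n) * A ^ (1 - α) * F ^ 4 = x ^ α * F ^ 4 * A := by
    rw [Real.div_rpow (by positivity) (by positivity), Real.rpow_sub (by positivity),
      Real.rpow_one, show 2 * α * (n : ℝ) = ((2 * n : ℕ) : ℝ) * α by push_cast; ring,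
      Real.rpow_mul (Nat.cast_nonneg n), Real.rpow_natCast]
    field_simp
  have hRHS : (2 * (n : ℝ) + 1) * G ^ 3 = G ^ 2 * A := by rw [hA]; ring
  rw [hLHS, hRHS, div_le_one (by positivity)]
  refine mul_le_mul_of_nonneg_right ?_ (by positivity)
  refine Real.rpow_mul_le_of_mul_pow_le four_ne_zero (by positivity) (by positivity)
    (by positivity) hα.1 (by simpa using hα.2) ?_ ?_
  · simpa only [← pow_mul] using pow_le_pow_left₀ (by positivity) hF 2
  · rw [div_mul_eq_mul_div, div_le_iff₀ (by positivity), hA]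
    linear_combination key

theorem stmt13 (α : ℝ) (hα : α ∈ Set.Icc (0 : ℝ) (1 / 4)) (n : ℕ) (hn : 1 ≤ n) :
    (n : ℝ) ^ (2 * α * (n : ℝ)) * ((2 * n + 1).factorial : ℝ) ^ ((1 : ℝ) - α)
        * ((n.factorial : ℝ)) ^ 4
      / ((2 * (n : ℝ) + 1) * (((2 * n).factorial : ℝ)) ^ 3) ≤ 1 :=
  stmt13_general α hα n
end

section
/- Let d ∈ ℕ and let (RN_{n,M,Q})_{n,M,Q∈ℤ} ⊆ ℕ_0 be natural numbers satisfying RN_{0,M,Q} = 0 for all M, Q ∈ ℕ and RN_{n,M,Q} ≤ d M^n + Σ_{l=0}^{n−1} [ Q M^{n−l} ( d + RN_{l,M,Q} + 1_ℕ(l) · RN_{l−1,M,Q} ) ] for all n, M, Q ∈ ℕ, where 1_ℕ(l) = 1 if l ≥ 1 and 1_ℕ(0) = 0. Then for every N ∈ ℕ it holds that RN_{N,N,N} ≤ 8 d N^{2N}. -/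
/-!
For arbitrary `M ≥ 1` and `Q`, strong induction on `n` gives
`RN n + d M^n ≤ d (Q+2)^n M^n`: substituting this bound into the recursion, the `l`-th summand
(`l ≥ 1`) is at most `Q (Q+3) d (Q+2)^(l-1) M^n`, and the resulting geometric sum closes the
induction because `Q (Q+3) < (Q+1)(Q+2)`. With `M = Q = N` it remains to use `(N+2)^N = N^N (1 + 2/N)^N ≤ e² N^N ≤ 8 N^N`.
-/

open Finset

lemma Real.one_add_div_pow_le_exp {t : ℝ} (ht : 0 ≤ t) (n : ℕ) : (1 + t / n) ^ n ≤ exp t := by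
  rcases n.eq_zero_or_pos with rfl | hn
  · simpa using Real.one_le_exp ht
  calc (1 + t / n) ^ n ≤ exp (t / n) ^ n := by
        refine pow_le_pow_left₀ (by positivity) ?_ n
        linarith [Real.add_one_le_exp (t / n)]
    _ = exp t := by rw [← Real.exp_nat_mul]; field_simp

lemma Real.exp_two_le_eight : Real.exp 2 ≤ 8 := by
  have h : Real.exp 2 = Real.exp 1 ^ 2 := by rw [← Real.exp_nat_mul]; norm_num
  nlinarith [Real.exp_one_lt_d9, Real.exp_pos 1]

lemma Nat.add_two_pow_self_le (N : ℕ) : (N + 2) ^ N ≤ 8 * N ^ N := by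
  rcases N.eq_zero_or_pos with rfl | hN
  · simp
  have hN' : (0 : ℝ) < N := by exact_mod_cast hN
  suffices ((N : ℝ) + 2) ^ N ≤ 8 * (N : ℝ) ^ N by exact_mod_cast this
  calc ((N : ℝ) + 2) ^ N = (1 + 2 / N) ^ N * (N : ℝ) ^ N := by
        rw [← mul_pow]; congr 1; field_simp
    _ ≤ 8 * (N : ℝ) ^ N := by
        gcongr
        exact (Real.one_add_div_pow_le_exp zero_le_two N).trans Real.exp_two_le_eight

lemma two_add_add_mul_geom_sum_le (Q m : ℕ) :
    2 + Q + Q * (Q + 3) * ∑ i ∈ range m, (Q + 2) ^ i ≤ (Q + 2) ^ (m + 1) := by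
  have hgeom : (∑ i ∈ range m, (Q + 2) ^ i) * (Q + 1) + 1 = (Q + 2) ^ m :=
    geom_sum_mul_add (Q + 1) m
  rw [pow_succ, ← hgeom]
  nlinarith [Nat.zero_le (∑ i ∈ range m, (Q + 2) ^ i)]

section CostRecursion

variable {a : ℕ → ℕ} {d M Q : ℕ}

lemma cost_summand_le (hM : 1 ≤ M) {i m : ℕ} (him : i < m)
    (h₁ : a (i + 1) + d * M ^ (i + 1) ≤ d * (Q + 2) ^ (i + 1) * M ^ (i + 1))
    (h₀ : a i + d * M ^ i ≤ d * (Q + 2) ^ i * M ^ i) :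
    Q * M ^ (m - i) * (d + a (i + 1) + a i) ≤ Q * (Q + 3) * d * M ^ (m + 1) * (Q + 2) ^ i := by
  have hd : d ≤ d * M ^ (i + 1) := Nat.le_mul_of_pos_right d (by positivity)
  have hMi : M ^ i ≤ M ^ (i + 1) := Nat.pow_le_pow_right hM (Nat.le_succ i)
  have hinner : d + a (i + 1) + a i ≤ (Q + 3) * d * (Q + 2) ^ i * M ^ (i + 1) := by
    have : d * (Q + 2) ^ i * M ^ i ≤ d * (Q + 2) ^ i * M ^ (i + 1) := Nat.mul_le_mul_left _ hMi
    have hexp : d * (Q + 2) ^ (i + 1) * M ^ (i + 1) + d * (Q + 2) ^ i * M ^ (i + 1)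
        = (Q + 3) * d * (Q + 2) ^ i * M ^ (i + 1) := by ring
    omega
  have hM' : M ^ (m - i) * M ^ (i + 1) = M ^ (m + 1) := by
    rw [← pow_add]; congr 1; omega
  calc Q * M ^ (m - i) * (d + a (i + 1) + a i)
      ≤ Q * M ^ (m - i) * ((Q + 3) * d * (Q + 2) ^ i * M ^ (i + 1)) := by gcongr
    _ = Q * (Q + 3) * d * (M ^ (m - i) * M ^ (i + 1)) * (Q + 2) ^ i := by ring
    _ = Q * (Q + 3) * d * M ^ (m + 1) * (Q + 2) ^ i := by rw [hM']

theorem add_mul_pow_le_of_le_cost_sum (hM : 1 ≤ M) (h0 : a 0 = 0)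
    (hrec : ∀ n, 1 ≤ n → a n ≤ d * M ^ n + ∑ l ∈ range n,
      Q * M ^ (n - l) * (d + a l + if 1 ≤ l then a (l - 1) else 0)) (n : ℕ) :
    a n + d * M ^ n ≤ d * (Q + 2) ^ n * M ^ n := by
  induction n using Nat.strong_induction_on with | _ n ih => ?_
  rcases n with _ | m
  · simp [h0]
  have hsum : ∑ i ∈ range m, Q * M ^ (m - i) * (d + a (i + 1) + a i)
      ≤ Q * (Q + 3) * d * M ^ (m + 1) * ∑ i ∈ range m, (Q + 2) ^ i := by
    rw [mul_sum]
    refine sum_le_sum fun i hi => ?_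
    have him := mem_range.mp hi
    exact cost_summand_le hM him (ih (i + 1) (by omega)) (ih i (by omega))
  have hrecm := hrec (m + 1) m.succ_pos
  simp only [sum_range_succ', Nat.reduceSubDiff, le_add_iff_nonneg_left, zero_le, ↓reduceIte,
    add_tsub_cancel_right, tsub_zero, h0, add_zero, nonpos_iff_eq_zero, one_ne_zero] at hrecm
  have hgeom := Nat.mul_le_mul_left (d * M ^ (m + 1)) (two_add_add_mul_geom_sum_le Q m)
  calc a (m + 1) + d * M ^ (m + 1)
      ≤ d * M ^ (m + 1) + (Q * (Q + 3) * d * M ^ (m + 1) * ∑ i ∈ range m, (Q + 2) ^ i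
          + Q * M ^ (m + 1) * d) + d * M ^ (m + 1) := by gcongr; omega
    _ = d * M ^ (m + 1) * (2 + Q + Q * (Q + 3) * ∑ i ∈ range m, (Q + 2) ^ i) := by ring
    _ ≤ d * M ^ (m + 1) * (Q + 2) ^ (m + 1) := hgeom
    _ = d * (Q + 2) ^ (m + 1) * M ^ (m + 1) := by ring

end CostRecursion

theorem stmt16_general (d : ℕ)
    (RN : ℕ → ℕ → ℕ → ℕ)
    (hRN0 : ∀ M Q : ℕ, 1 ≤ M → 1 ≤ Q → RN 0 M Q = 0)
    (hRNrec : ∀ n M Q : ℕ, 1 ≤ n → 1 ≤ M → 1 ≤ Q →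
      RN n M Q ≤ d * M ^ n + ∑ l ∈ Finset.range n,
        Q * M ^ (n - l) * (d + RN l M Q + if 1 ≤ l then RN (l - 1) M Q else 0))
    (N : ℕ) (hN : 1 ≤ N) :
    RN N N N ≤ 8 * d * N ^ (2 * N) := by
  have hbound := add_mul_pow_le_of_le_cost_sum (a := fun n => RN n N N) hN (hRN0 N N hN hN)
    (fun n hn => hRNrec n N N hn hN hN) N
  calc RN N N N ≤ d * (N + 2) ^ N * N ^ N := le_of_add_le_left hbound
    _ ≤ d * (8 * N ^ N) * N ^ N := by gcongr; exact Nat.add_two_pow_self_le N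
    _ = 8 * d * N ^ (2 * N) := by ring

theorem stmt16 (d : ℕ) (hd : 1 ≤ d)
    (RN : ℕ → ℕ → ℕ → ℕ)
    (hRN0 : ∀ M Q : ℕ, 1 ≤ M → 1 ≤ Q → RN 0 M Q = 0)
    (hRNrec : ∀ n M Q : ℕ, 1 ≤ n → 1 ≤ M → 1 ≤ Q →
      RN n M Q ≤ d * M ^ n + ∑ l ∈ Finset.range n,
        Q * M ^ (n - l) * (d + RN l M Q + if 1 ≤ l then RN (l - 1) M Q else 0))
    (N : ℕ) (hN : 1 ≤ N) :
    RN N N N ≤ 8 * d * N ^ (2 * N) :=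
  stmt16_general d RN hRN0 hRNrec N hN
end

section
/- Let (FE_{n,M,Q})_{n,M,Q∈ℤ} ⊆ ℕ_0 be natural numbers satisfying FE_{0,M,Q} = 0 for all M, Q ∈ ℕ and FE_{n,M,Q} ≤ M^n + Σ_{l=0}^{n−1} [ Q M^{n−l} ( 1 + FE_{l,M,Q} + 1_ℕ(l) + 1_ℕ(l) · FE_{l−1,M,Q} ) ] for all n, M, Q ∈ ℕ, where 1_ℕ(l) = 1 if l ≥ 1 and 1_ℕ(0) = 0. Then for every N ∈ ℕ it holds that FE_{N,N,N} ≤ 8 N^{2N}. -/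
/-!
For any `r > M Q + M`, strong induction gives `FE n M Q < r ^ n`: if `FE l M Q < r ^ l` for
`l < n`, the recursion bounds `FE n M Q` by `T n = M ^ n + ∑_{l<n} Q M^(n-l) (r^l + r^(l-1))`,
and `T n < r ^ n` because `T (n+1) = M T n + Q M (r^n + r^(n-1))` and `M + Q M < r`.
For `M = Q = N` and `r = N² + N + 1`, `r ^ N = N^(2N) (1 + (N+1)/N²)^N ≤ e² N^(2N) < 8 N^(2N)`.
-/

open Finset

def mlpCostBound (M Q : ℕ) (F : ℕ → ℕ) (n : ℕ) : ℕ :=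
  M ^ n + ∑ l ∈ range n,
    Q * M ^ (n - l) * (1 + F l + (if 1 ≤ l then 1 else 0) + if 1 ≤ l then F (l - 1) else 0)

theorem Finset.sum_range_succ_pow_sub_mul {R : Type*} [CommSemiring R] (x : R) (f : ℕ → R)
    (n : ℕ) :
    ∑ l ∈ range (n + 1), x ^ (n + 1 - l) * f l =
      x * ∑ l ∈ range n, x ^ (n - l) * f l + x * f n := by
  rw [sum_range_succ, mul_sum, Nat.add_sub_cancel_left, pow_one]
  congr 1
  refine sum_congr rfl fun l hl => ?_
  rw [Nat.sub_add_comm (mem_range.1 hl).le, pow_succ]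
  ring

theorem pow_add_sum_pow_sub_mul_lt_pow {M Q r : ℕ} (hr : M * Q + M < r) {n : ℕ} (hn : 1 ≤ n) :
    M ^ n + ∑ l ∈ range n, M ^ (n - l) * (Q * (r ^ l + if 1 ≤ l then r ^ (l - 1) else 0)) <
      r ^ n := by
  induction n, hn using Nat.le_induction with
  | base => simpa [add_comm] using hr
  | succ n hn ih =>
    obtain ⟨k, rfl⟩ : ∃ k, n = k + 1 := ⟨n - 1, by omega⟩
    have step : ∀ B p : ℕ, B ≤ r * p → 0 < p →
        M * B + M * (Q * (r * p + p)) < r * (r * p) := fun B p hB hp =>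
      calc M * B + M * (Q * (r * p + p)) ≤ (M + M * Q) * (r * p) + M * Q * p := by
            nlinarith [Nat.mul_le_mul_left M hB]
        _ < (M + M * Q) * (r * p) + r * p := by gcongr; omega
        _ = (M * Q + M + 1) * (r * p) := by ring
        _ ≤ r * (r * p) := Nat.mul_le_mul_right _ hr
    rw [sum_range_succ_pow_sub_mul, if_pos hn, Nat.add_sub_cancel, pow_succ M, mul_comm _ M,
      ← add_assoc, ← mul_add, pow_succ' r (k + 1), pow_succ' r k]
    rw [pow_succ' r k] at ih
    exact step _ _ ih.le (pow_pos (by omega) k)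

theorem mlpCostBound_lt_pow {M Q r : ℕ} (hr : M * Q + M < r) {F : ℕ → ℕ} {n : ℕ} (hn : 1 ≤ n)
    (hF : ∀ l < n, F l < r ^ l) : mlpCostBound M Q F n < r ^ n := by
  refine lt_of_le_of_lt (Nat.add_le_add_left (sum_le_sum fun l hl => ?_) _)
    (pow_add_sum_pow_sub_mul_lt_pow hr hn)
  have hl := mem_range.1 hl
  have hterm : (1 + F l + (if 1 ≤ l then 1 else 0) + if 1 ≤ l then F (l - 1) else 0) ≤
      r ^ l + if 1 ≤ l then r ^ (l - 1) else 0 := by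
    have := hF l hl
    split_ifs
    · have := hF (l - 1) (by omega)
      omega
    · omega
  calc _ = M ^ (n - l) * (Q * (1 + F l + (if 1 ≤ l then 1 else 0) +
        if 1 ≤ l then F (l - 1) else 0)) := by ring
    _ ≤ _ := by gcongr

theorem lt_pow_of_le_mlpCostBound {M Q r : ℕ} (hr : M * Q + M < r) {F : ℕ → ℕ} (h0 : F 0 = 0)
    (hrec : ∀ n, 1 ≤ n → F n ≤ mlpCostBound M Q F n) (n : ℕ) : F n < r ^ n := by
  induction n using Nat.strong_induction_on with
  | _ n ih =>
    rcases Nat.eq_zero_or_pos n with rfl | hn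
    · simp [h0]
    · exact (hrec n hn).trans_lt (mlpCostBound_lt_pow hr hn ih)

theorem mul_self_add_add_one_pow_le (N : ℕ) : (N * N + N + 1) ^ N ≤ 8 * N ^ (2 * N) := by
  rcases Nat.eq_zero_or_pos N with rfl | hN
  · simp
  have hN' : (0 : ℝ) < N := by exact_mod_cast hN
  have hbase : (N * N + N + 1 : ℝ) ≤ N * N * Real.exp (2 / N) := by
    have hx : (N + 1 : ℝ) / (N * N) ≤ 2 / N := by
      rw [div_le_div_iff₀ (by positivity) hN']
      nlinarith [(by exact_mod_cast hN : (1 : ℝ) ≤ N)]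
    calc (N * N + N + 1 : ℝ) = N * N * ((N + 1) / (N * N) + 1) := by field_simp; ring
      _ ≤ N * N * Real.exp (2 / N) := by
        gcongr
        exact (add_le_add_left hx 1).trans (Real.add_one_le_exp _)
  have hexp : Real.exp 2 < 8 := by
    have h := Real.exp_one_lt_d9
    have : Real.exp 2 = Real.exp 1 ^ 2 := by rw [← Real.exp_nat_mul]; norm_num
    nlinarith [Real.exp_pos 1]
  have : ((N * N + N + 1 : ℕ) : ℝ) ^ N ≤ ((8 * N ^ (2 * N) : ℕ) : ℝ) := by
    push_cast
    calc (N * N + N + 1 : ℝ) ^ N ≤ (N * N * Real.exp (2 / N)) ^ N := by gcongr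
      _ = Real.exp 2 * N ^ (2 * N) := by
        rw [mul_pow, ← Real.exp_nat_mul, mul_div_cancel₀ _ hN'.ne', ← pow_two, ← pow_mul]
        ring
      _ ≤ 8 * N ^ (2 * N) := by gcongr
  exact_mod_cast this

theorem stmt17
    (FE : ℕ → ℕ → ℕ → ℕ)
    (hFE0 : ∀ M Q : ℕ, 1 ≤ M → 1 ≤ Q → FE 0 M Q = 0)
    (hFErec : ∀ n M Q : ℕ, 1 ≤ n → 1 ≤ M → 1 ≤ Q →
      FE n M Q ≤ M ^ n + ∑ l ∈ Finset.range n,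
        Q * M ^ (n - l) * (1 + FE l M Q + (if 1 ≤ l then 1 else 0)
          + if 1 ≤ l then FE (l - 1) M Q else 0))
    (N : ℕ) (hN : 1 ≤ N) :
    FE N N N ≤ 8 * N ^ (2 * N) := by
  have hlt : FE N N N < (N * N + N + 1) ^ N :=
    lt_pow_of_le_mlpCostBound (F := fun n => FE n N N) (Nat.lt_succ_self _) (hFE0 N N hN hN)
      (fun n hn => hFErec n N N hn hN hN) N
  exact hlt.le.trans (mul_self_add_add_one_pow_le N)
end
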